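/- arXiv:0707.1539 — 13 statements merged into one kernel-verified Lean document; each statement's English description precedes it below -/
import Mathlib

section
/- Let R be a commutative ring that is not reduced (its nilradical is nonzero), and let α be the R-automorphism of R[x] defined by α(x) = x + 1. Then there exists an R-automorphism σ of R[x] such that σ⁻¹ ∘ α ∘ σ does not belong to B_x(R); in particular, B_x(R) is not a normal subgroup of G(R). -/
open Polynomial

/-- The group `B_x(R)` of `R`-automorphisms of `R[x]` of basic form
`x ↦ u·x + a` with `u` a unit of `R` and `a ∈ R`. -/
def Bx (R : Type*) [CommRing R] : Subgroup (R[X] ≃ₐ[R] R[X]) where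
  carrier := {σ | ∃ u : Rˣ, ∃ a : R, σ X = C (u : R) * X + C a}
  one_mem' := ⟨1, 0, by simp⟩
  mul_mem' := by
    rintro σ τ ⟨u, a, hu⟩ ⟨v, b, hv⟩
    refine ⟨u * v, (v : R) * a + b, ?_⟩
    show σ (τ X) = _
    rw [hv, map_add, map_mul, ← Polynomial.algebraMap_eq, AlgEquiv.commutes,
      AlgEquiv.commutes, Polynomial.algebraMap_eq, hu]
    push_cast
    simp only [C_mul, C_add]
    ring
  inv_mem' := by
    rintro σ ⟨u, a, hu⟩
    refine ⟨u⁻¹, -(((u⁻¹ : Rˣ) : R) * a), ?_⟩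
    show σ.symm X = _
    have h : σ.symm (σ X) = X := σ.symm_apply_apply X
    rw [hu, map_add, map_mul, ← Polynomial.algebraMap_eq, AlgEquiv.commutes,
      AlgEquiv.commutes, Polynomial.algebraMap_eq] at h
    have key : C ((u⁻¹ : Rˣ) : R) * C ((u : Rˣ) : R) = 1 := by
      rw [← C_mul]; simp
    rw [C_neg, C_mul]
    linear_combination C ((u⁻¹ : Rˣ) : R) * h - σ.symm X * key


lemma exists_sq_eq_zero {R : Type*} [CommRing R] (hR : ¬ IsReduced R) :
    ∃ c : R, c ≠ 0 ∧ c * c = 0 := by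
  classical
  rw [isReduced_iff] at hR
  push_neg at hR
  obtain ⟨x, ⟨n, hn⟩, hx⟩ := hR
  have hP : ∃ m, x ^ m = 0 := ⟨n, hn⟩
  have hk : x ^ Nat.find hP = 0 := Nat.find_spec hP
  have hk2 : 2 ≤ Nat.find hP := by
    by_contra h
    push_neg at h
    interval_cases h' : Nat.find hP
    · rw [pow_zero] at hk
      exact hx (by rw [← mul_one x, hk, mul_zero])
    · rw [pow_one] at hk
      exact hx hk
  refine ⟨x ^ (Nat.find hP - 1), Nat.find_min hP (by omega), ?_⟩
  rw [← pow_add, show Nat.find hP - 1 + (Nat.find hP - 1)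
      = Nat.find hP + (Nat.find hP - 2) by omega, pow_add, hk, zero_mul]

/-- Theorem: if `R` is not reduced and `α(x) = x + 1`, then some `G(R)`-conjugate of `α`
lies outside `B_x(R)`; in particular `B_x(R)` is not a normal subgroup of `G(R)`. -/
theorem conjugate_of_translation_not_basic (R : Type*) [CommRing R]
    (hR : ¬ IsReduced R) (α : R[X] ≃ₐ[R] R[X]) (hα : α X = X + 1) :
    (∃ σ : R[X] ≃ₐ[R] R[X], σ⁻¹ * α * σ ∉ Bx R) ∧ ¬ (Bx R).Normal := by

  obtain ⟨c, hc0, hc⟩ := exists_sq_eq_zero hR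
  have hd : C c * C c = 0 := by rw [← C_mul, hc, C_0]
  set p : R[X] := X + C c * X ^ 3 + C c * X ^ 4 with hp
  set q : R[X] := X - C c * X ^ 3 - C c * X ^ 4 with hq
  have h1 : (aeval p).comp (aeval q) = AlgHom.id R R[X] := by
    apply Polynomial.algHom_ext
    simp only [AlgHom.coe_comp, Function.comp_apply, aeval_X, AlgHom.coe_id, id_eq]
    simp only [hq, hp, map_add, map_sub, map_mul, map_pow, aeval_X, aeval_C,
      Polynomial.algebraMap_eq]
    linear_combination ((-3) * X ^ 5 + (-7) * X ^ 6 + (-4) * X ^ 7 + (-3) * X ^ 7 * C c + (-12) * X ^ 8 * C c + (-15) * X ^ 9 * C c + (-1) * X ^ 9 * C c ^ 2 + (-6) * X ^ 10 * C c + (-7) * X ^ 10 * C c ^ 2 + (-15) * X ^ 11 * C c ^ 2 + (-13) * X ^ 12 * C c ^ 2 + (-1) * X ^ 12 * C c ^ 3 + (-4) * X ^ 13 * C c ^ 2 + (-4) * X ^ 13 * C c ^ 3 + (-6) * X ^ 14 * C c ^ 3 + (-4) * X ^ 15 * C c ^ 3 + (-1) * X ^ 16 * C c ^ 3) * hd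
  have h2 : (aeval q).comp (aeval p) = AlgHom.id R R[X] := by
    apply Polynomial.algHom_ext
    simp only [AlgHom.coe_comp, Function.comp_apply, aeval_X, AlgHom.coe_id, id_eq]
    simp only [hq, hp, map_add, map_sub, map_mul, map_pow, aeval_X, aeval_C,
      Polynomial.algebraMap_eq]
    linear_combination ((-3) * X ^ 5 + (-7) * X ^ 6 + (-4) * X ^ 7 + (3) * X ^ 7 * C c + (12) * X ^ 8 * C c + (15) * X ^ 9 * C c + (-1) * X ^ 9 * C c ^ 2 + (6) * X ^ 10 * C c + (-7) * X ^ 10 * C c ^ 2 + (-15) * X ^ 11 * C c ^ 2 + (-13) * X ^ 12 * C c ^ 2 + (1) * X ^ 12 * C c ^ 3 + (-4) * X ^ 13 * C c ^ 2 + (4) * X ^ 13 * C c ^ 3 + (6) * X ^ 14 * C c ^ 3 + (4) * X ^ 15 * C c ^ 3 + (1) * X ^ 16 * C c ^ 3) * hd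
  set σ : R[X] ≃ₐ[R] R[X] := AlgEquiv.ofAlgHom (aeval p) (aeval q) h1 h2 with hσ
  have hCα : ∀ r : R, α (C r) = C r := fun r => by
    rw [← Polynomial.algebraMap_eq]; exact α.commutes r
  have hσinv : ∀ y : R[X], σ⁻¹ y = aeval q y := fun y => rfl
  have hσX : σ X = p := by rw [hσ]; exact aeval_X p
  have hkey : (σ⁻¹ * α * σ) X
      = C (4 * c) * X ^ 3 + C (9 * c) * X ^ 2 + C (7 * c + 1) * X + C (2 * c + 1) := by
    have : (σ⁻¹ * α * σ) X = σ⁻¹ (α (σ X)) := rfl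
    rw [this, hσX, hσinv]
    simp only [hp, hq, map_add, map_sub, map_mul, map_pow, hα, hCα, aeval_X, aeval_C,
      Polynomial.algebraMap_eq, map_one, C_mul, C_add, C_1, map_ofNat]
    linear_combination ((-7) * X ^ 3 + (-25) * X ^ 4 + (-33) * X ^ 5 + (-19) * X ^ 6 + (9) * X ^ 6 * C c + (-4) * X ^ 7 + (33) * X ^ 7 * C c + (45) * X ^ 8 * C c + (27) * X ^ 9 * C c + (-5) * X ^ 9 * C c ^ 2 + (6) * X ^ 10 * C c + (-19) * X ^ 10 * C c ^ 2 + (-27) * X ^ 11 * C c ^ 2 + (-17) * X ^ 12 * C c ^ 2 + (1) * X ^ 12 * C c ^ 3 + (-4) * X ^ 13 * C c ^ 2 + (4) * X ^ 13 * C c ^ 3 + (6) * X ^ 14 * C c ^ 3 + (4) * X ^ 15 * C c ^ 3 + (1) * X ^ 16 * C c ^ 3) * hd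
  have hnotmem : σ⁻¹ * α * σ ∉ Bx R := by
    rintro ⟨u, a, hu⟩
    rw [hkey] at hu
    have h3 := congrArg (fun f : R[X] => f.coeff 3) hu
    have h2' := congrArg (fun f : R[X] => f.coeff 2) hu
    simp only [coeff_add, coeff_C_mul, coeff_C, coeff_X, coeff_X_pow] at h3 h2'
    norm_num at h3 h2'
    exact hc0 (by linear_combination h2' - 2 * h3)
  refine ⟨⟨σ, hnotmem⟩, fun hnorm => ?_⟩
  have hαmem : α ∈ Bx R := ⟨1, 1, by rw [hα]; simp⟩
  have := hnorm.conj_mem α hαmem σ⁻¹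
  rw [inv_inv] at this
  exact hnotmem this
end

section
/- Let R be a commutative ring, let u be a unit of R, let a, b ∈ R, and let α and β be the R-automorphisms of R[x] defined by α(x) = a + u·x and β(x) = b + u·x. If there exists an R-automorphism σ of R[x] with β = σ⁻¹ ∘ α ∘ σ, then there exists τ ∈ B_x(R) with β = τ⁻¹ ∘ α ∘ τ. -/
open Polynomial


lemma myIsUnit_of_maximal {R : Type*} [CommRing R] (x : R)
    (h : ∀ (m : Ideal R), m.IsMaximal → x ∉ m) : IsUnit x := by
  by_contra hx
  obtain ⟨m, hm, hxm⟩ := exists_max_ideal_of_mem_nonunits (mem_nonunits_iff.mpr hx)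
  exact h m hm hxm

lemma myNatDegree_one {K : Type*} [CommRing K] [IsDomain K] (p q : K[X])
    (h : q.comp p = X) : p.natDegree = 1 := by
  have h1 : q.natDegree * p.natDegree = 1 := by
    rw [← natDegree_comp, h, natDegree_X]
  exact Nat.eq_one_of_mul_eq_one_left h1

set_option maxHeartbeats 1000000 in
lemma myKey {R : Type*} [CommRing R] (p q : R[X]) (hqp : q.comp p = X) (a : R) :
    ∃ v : R, IsUnit v ∧ a * v = p.eval a - p.eval 0 := by
  obtain ⟨g, hg⟩ := X_sub_C_dvd_sub_C_eval (a := a) (p := p)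
  refine ⟨g.eval 0, ?_, ?_⟩
  · apply myIsUnit_of_maximal
    intro m hm hvm
    haveI := hm
    set f : R →+* R ⧸ m := Ideal.Quotient.mk m with hf
    have hcomp : (q.map f).comp (p.map f) = X := by
      rw [← Polynomial.map_comp, hqp, Polynomial.map_X]
    have hdeg : (p.map f).natDegree = 1 := myNatDegree_one _ _ hcomp
    set p' := p.map f with hp'def
    set e1 := p'.coeff 1 with he1
    set e0 := p'.coeff 0 with he0
    have hp' : p' = C e1 * X + C e0 :=
      eq_X_add_C_of_natDegree_le_one hdeg.le
    have hlc : e1 ≠ 0 := by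
      intro h0
      have hne : p' ≠ 0 := fun hz => by simp [hz] at hdeg
      have := mt leadingCoeff_eq_zero.mp hne
      rw [leadingCoeff, hdeg] at this
      exact this h0
    have heval : p'.eval (f a) = e1 * f a + e0 := by
      conv_lhs => rw [hp']
      simp
    have hfe : f (p.eval a) = p'.eval (f a) := by
      rw [hp'def, Polynomial.eval_map, Polynomial.eval₂_at_apply]
    have hg' : p' - C (p'.eval (f a)) = (X - C (f a)) * g.map f := by
      have h2 := congrArg (Polynomial.map f) hg
      rw [Polynomial.map_sub, Polynomial.map_mul, Polynomial.map_sub, Polynomial.map_X,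
        Polynomial.map_C, Polynomial.map_C] at h2
      rw [← hfe]
      exact h2
    have hgf : g.map f = C e1 := by
      apply mul_left_cancel₀ (X_sub_C_ne_zero (f a))
      rw [← hg', heval, hp']
      simp only [C_add, C_mul]
      ring
    have h5 : f (g.eval 0) = e1 := by
      have h6 : (g.map f).eval (f 0) = e1 := by rw [hgf, eval_C]
      rw [Polynomial.eval_map, Polynomial.eval₂_at_apply] at h6
      simpa using h6
    exact hlc (by rw [← h5, hf, Ideal.Quotient.eq_zero_iff_mem]; exact hvm)
  · have h3 := congrArg (Polynomial.eval 0) hg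
    simp only [eval_sub, eval_mul, eval_X, eval_C, zero_sub, neg_mul] at h3
    linear_combination h3

set_option maxHeartbeats 1000000 in
noncomputable def linAut {R : Type*} [CommRing R] (w : Rˣ) (c : R) : R[X] ≃ₐ[R] R[X] := by
  have key : ∀ (s t : Rˣ) (d e : R), s = t⁻¹ → e = -((t⁻¹ : Rˣ) : R) * d →
      (aeval (C (t : R) * X + C d)).comp (aeval (C (s : R) * X + C e)) = AlgHom.id R R[X] := by
    intro s t d e hs he
    apply Polynomial.algHom_ext
    simp only [AlgHom.coe_comp, Function.comp_apply, aeval_X, map_add, map_mul, aeval_C,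
      Polynomial.algebraMap_eq, AlgHom.coe_id, id_eq]
    subst hs he
    have hC : (C ((t⁻¹ : Rˣ) : R) : R[X]) * C ((t : Rˣ) : R) = 1 := by
      rw [← C_mul]; simp
    simp only [C_mul, C_neg]
    linear_combination (X : R[X]) * hC
  exact AlgEquiv.ofAlgHom (aeval (C (w : R) * X + C c))
    (aeval (C ((w⁻¹ : Rˣ) : R) * X + C (-((w⁻¹ : Rˣ) : R) * c)))
    (key w⁻¹ w c _ rfl rfl)
    (by
      have := key (w⁻¹)⁻¹ w⁻¹ (-((w⁻¹ : Rˣ) : R) * c) c ?_ ?_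
      · simpa using this
      · simp
      · have hC : ((w⁻¹ : Rˣ) : R) * ((w : Rˣ) : R) = 1 := by
          exact_mod_cast w.inv_mul
        have : (((w⁻¹)⁻¹ : Rˣ) : R) = (w : R) := by simp
        rw [this]
        linear_combination (-(c : R)) * hC)

lemma linAut_apply_X {R : Type*} [CommRing R] (w : Rˣ) (c : R) :
    linAut w c X = C (w : R) * X + C c := by
  show aeval (C (w : R) * X + C c) X = _
  rw [aeval_X]

/-- Theorem: basic automorphisms `α(x) = a + u·x` and `β(x) = b + u·x` (same unit `u`)
that are conjugate in `G(R)` are already conjugate by an element of `B_x(R)`. -/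
theorem basic_conjugate_of_G_conjugate (R : Type*) [CommRing R] (u : Rˣ) (a b : R)
    (α β : R[X] ≃ₐ[R] R[X])
    (hα : α X = C a + C (u : R) * X) (hβ : β X = C b + C (u : R) * X)
    (h : ∃ σ : R[X] ≃ₐ[R] R[X], β = σ⁻¹ * α * σ) :
    ∃ τ ∈ Bx R, β = τ⁻¹ * α * τ := by
  obtain ⟨σ, hσ⟩ := h
  set p := σ X with hp
  have hqp : ((σ⁻¹ : R[X] ≃ₐ[R] R[X]) X).comp p = X := by
    rw [comp_eq_aeval, hp, aeval_algHom_apply σ X, aeval_X_left_apply,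
      ← AlgEquiv.mul_apply, mul_inv_cancel, AlgEquiv.one_apply]
  have hX : σ (β X) = α (σ X) := by
    have h1 : σ * β = α * σ := by rw [hσ]; group
    have h1' := DFunLike.congr_fun h1 X
    simpa [AlgEquiv.mul_apply] using h1'
  have h2 : C b + C (u : R) * p = aeval (C a + C (u : R) * X) p := by
    have h3 : σ (β X) = C b + C (u : R) * p := by
      rw [hβ, map_add, map_mul, ← Polynomial.algebraMap_eq, AlgEquiv.commutes,
        AlgEquiv.commutes, Polynomial.algebraMap_eq]
    have h4 : α (σ X) = aeval (C a + C (u : R) * X) p := by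
      rw [← hα, hp, aeval_algHom_apply α X, aeval_X_left_apply]
    rw [← h3, hX, h4]
  have hconst : b + (u : R) * p.eval 0 = p.eval a := by
    have h5 := congrArg (Polynomial.eval 0) h2
    rw [← comp_eq_aeval, eval_comp] at h5
    simpa using h5
  obtain ⟨v, hv, hav⟩ := myKey p _ hqp a
  obtain ⟨vu, rfl⟩ := hv
  set c := p.eval 0 with hc
  have hs : b + (u : R) * c = (vu : R) * a + c := by linear_combination hconst - hav
  refine ⟨linAut vu c, ⟨vu, c, linAut_apply_X vu c⟩, ?_⟩
  rw [mul_assoc, eq_inv_mul_iff_mul_eq]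
  have hhom : ((linAut vu c * β : R[X] ≃ₐ[R] R[X]) : R[X] →ₐ[R] R[X])
      = ((α * linAut vu c : R[X] ≃ₐ[R] R[X]) : R[X] →ₐ[R] R[X]) := by
    apply Polynomial.algHom_ext
    show (linAut vu c * β) X = (α * linAut vu c) X
    rw [AlgEquiv.mul_apply, AlgEquiv.mul_apply, hβ, linAut_apply_X]
    simp only [map_add, map_mul, ← Polynomial.algebraMap_eq, AlgEquiv.commutes]
    simp only [Polynomial.algebraMap_eq]
    rw [linAut_apply_X, hα]
    have hC : (C (b + (u : R) * c) : R[X]) = C ((vu : R) * a + c) := by rw [hs]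
    simp only [C_add, C_mul] at hC
    linear_combination hC
  exact AlgEquiv.ext fun r => DFunLike.congr_fun hhom r
end

section
/- Let R be a commutative ring and let β be the R-automorphism of R[x] defined by β(x) = -x + 1. Then β∘β is the identity, and the ring of invariants of the cyclic group generated by β acting on R[x] equals R[y], the R-subalgebra of R[x] generated by y = x·(-x + 1). -/
open Polynomial

private lemma exists_repr (R : Type*) [CommRing R] (g : R[X]) :
    ∃ p q : R[X], g = aeval (X * (-X + 1) : R[X]) p + X * aeval (X * (-X + 1) : R[X]) q := by
  induction g using Polynomial.induction_on with
  | C a => exact ⟨C a, 0, by simp⟩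
  | add f g hf hg =>
    obtain ⟨p1, q1, rfl⟩ := hf
    obtain ⟨p2, q2, rfl⟩ := hg
    exact ⟨p1 + p2, q1 + q2, by simp; ring⟩
  | monomial n a ih =>
    obtain ⟨p, q, h⟩ := ih
    refine ⟨-(X * q), p + q, ?_⟩
    have : (C a : R[X]) * X ^ (n + 1) = X * (C a * X ^ n) := by ring
    rw [this, h]
    simp only [map_add, map_mul, map_neg, aeval_X]
    ring

private lemma two_X_mul_eq (R : Type*) [CommRing R] (Q : R[X]) (h : Q = 2 * X * Q) : Q = 0 := by
  ext k
  induction k using Nat.strong_induction_on with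
  | _ k ih =>
    rw [h, mul_assoc]
    cases k with
    | zero => simp
    | succ m => simp [coeff_X_mul, ih m (Nat.lt_succ_self m)]

/-- Theorem: for `β(x) = -x + 1`, `β∘β = 1` and the ring of invariants of `⟨β⟩`
acting on `R[x]` is `R[y]` where `y = x·(-x+1)`. -/
theorem invariants_of_negation_translation (R : Type*) [CommRing R]
    (β : R[X] ≃ₐ[R] R[X]) (hβ : β X = -X + 1) :
    β * β = 1 ∧
    {g : R[X] | ∀ σ ∈ Subgroup.zpowers β, σ g = g} =
      (Algebra.adjoin R ({X * (-X + 1)} : Set R[X]) : Set R[X]) := by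
  have hββ : β * β = 1 := by
    have key : ((β * β : R[X] ≃ₐ[R] R[X]) : R[X] →ₐ[R] R[X]) = AlgHom.id R R[X] := by
      apply Polynomial.algHom_ext
      simp [AlgEquiv.mul_apply, hβ, map_add, map_neg, map_one]
    exact AlgEquiv.ext fun g => DFunLike.congr_fun key g
  -- β fixes y
  have hy : β (X * (-X + 1)) = X * (-X + 1) := by
    have : β (-X + 1) = X := by rw [map_add, map_neg, hβ, map_one]; ring
    rw [map_mul, hβ, this]; ring
  -- β fixes anything of the form aeval y p
  have hfix : ∀ p : R[X], β (aeval (X * (-X + 1) : R[X]) p) = aeval (X * (-X + 1) : R[X]) p := by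
    intro p
    rw [← aeval_algHom_apply β, hy]
  refine ⟨hββ, ?_⟩
  ext g
  constructor
  · intro hg
    have hβg : β g = g := hg β (Subgroup.mem_zpowers β)
    obtain ⟨p, q, rfl⟩ := exists_repr R g
    set y : R[X] := X * (-X + 1) with hy_def
    have hq : aeval y q = 0 := by
      apply two_X_mul_eq
      have expand : β (aeval y p + X * aeval y q)
          = aeval y p + (-X + 1) * aeval y q := by
        rw [map_add, map_mul, hβ, hfix p, hfix q]
      rw [expand] at hβg
      linear_combination hβg
    rw [hq, mul_zero, add_zero]
    exact Polynomial.aeval_mem_adjoin_singleton R _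
  · intro hg σ hσ
    have hginv : β g = g := by
      rw [SetLike.mem_coe, Algebra.adjoin_singleton_eq_range_aeval] at hg
      obtain ⟨p, rfl⟩ := hg
      exact hfix p
    obtain ⟨k, rfl⟩ := Subgroup.mem_zpowers_iff.mp hσ
    have hnat : ∀ n : ℕ, (β ^ n) g = g := by
      intro n
      induction n with
      | zero => rfl
      | succ m ih => rw [pow_succ, AlgEquiv.mul_apply, hginv, ih]
    have hinv : β⁻¹ = β := inv_eq_of_mul_eq_one_right hββ
    cases k with
    | ofNat n => rw [Int.ofNat_eq_coe, zpow_natCast]; exact hnat n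
    | negSucc n =>
      rw [zpow_negSucc, ← inv_pow, hinv]
      exact hnat (n + 1)
end

section
/- Let R be a commutative ring and let f ∈ R[x] be such that the R-algebra homomorphism R[x] → R[x] sending x to f is injective (equivalently, R[f] is a polynomial ring over R). Let g be a nilpotent element of R[x]. Then there exists y ∈ R[x] such that R[f, g] = R[y] and the R-algebra homomorphism R[x] → R[x] sending x to y is injective, if and only if g ∈ R[f]. -/
/-!
Suppose `R[f, g] = R[y]` with `x ↦ y` injective. Modulo the nilradical `g` vanishes, so
`y = a + n` with `a ∈ R[f]` and `n` nilpotent. As `n ∈ R[y]`, `n = d(y)` for some `d`, which is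
nilpotent by injectivity, so `a = (X - d)(y)`. For nilpotent `d` one has `R[X - d] = R[X]`:
every `p` is `p(X - d)` plus a multiple of `d`, so `R[X] = R[X - d] + I • R[X]` for the
nilpotent ideal `I` generated by the coefficients of `d`, and Nakayama's lemma for nilpotent
ideals applies. Hence `g ∈ R[y] = R[a] ⊆ R[f]`. Conversely, if `g ∈ R[f]` take `y = f`.
-/

open Polynomial

theorem Submodule.le_of_le_sup_smul_of_isNilpotent {R M : Type*} [CommSemiring R]
    [AddCommMonoid M] [Module R M] {I : Ideal R} (hI : IsNilpotent I) {N P : Submodule R M}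
    (h : P ≤ N ⊔ I • P) : P ≤ N := by
  have hpow : ∀ n : ℕ, P ≤ N ⊔ I ^ n • P := by
    intro n
    induction n with
    | zero => simp
    | succ n ih =>
      calc P ≤ N ⊔ I ^ n • P := ih
        _ ≤ N ⊔ I ^ n • (N ⊔ I • P) := sup_le_sup_left (smul_mono_right _ h) _
        _ = N ⊔ I ^ n • N ⊔ I ^ (n + 1) • P := by
          rw [smul_sup, pow_succ, mul_smul, sup_assoc]
        _ ≤ N ⊔ I ^ (n + 1) • P := sup_le_sup_right (sup_le le_rfl smul_le_right) _
  obtain ⟨n, hn⟩ := hI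
  simpa [hn] using hpow n

theorem Algebra.exists_sub_mem_of_mem_adjoin_insert {R A : Type*} [CommSemiring R] [CommRing A]
    [Algebra R A] {J : Ideal A} {g x : A} {s : Set A} (hg : g ∈ J)
    (hx : x ∈ Algebra.adjoin R (insert g s)) : ∃ a ∈ Algebra.adjoin R s, x - a ∈ J := by
  have hmap : (Algebra.adjoin R (insert g s)).map (Ideal.Quotient.mkₐ R J) =
      (Algebra.adjoin R s).map (Ideal.Quotient.mkₐ R J) := by
    rw [AlgHom.map_adjoin, AlgHom.map_adjoin, Set.image_insert_eq, Ideal.Quotient.mkₐ_eq_mk,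
      Ideal.Quotient.eq_zero_iff_mem.mpr hg, Algebra.adjoin_insert_zero]
  obtain ⟨a, ha, hax⟩ := hmap ▸ Subalgebra.mem_map.mpr ⟨x, hx, rfl⟩
  exact ⟨a, ha, Ideal.Quotient.eq.mp hax.symm⟩

namespace Polynomial

theorem sub_dvd_aeval_sub {R A : Type*} [CommSemiring R] [CommRing A] [Algebra R A] (x y : A)
    (p : R[X]) : x - y ∣ aeval x p - aeval y p := by
  simpa only [eval_map_algebraMap] using sub_dvd_eval_sub x y (p.map (algebraMap R A))

variable {R : Type*} [CommRing R]

theorem isNilpotent_contentIdeal {d : R[X]} (hd : IsNilpotent d) :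
    IsNilpotent d.contentIdeal := by
  rw [d.contentIdeal_FG.isNilpotent_iff_le_nilradical, contentIdeal_def, Ideal.span_le]
  intro r hr
  obtain ⟨n, -, rfl⟩ := mem_coeffs_iff.mp hr
  exact Polynomial.isNilpotent_iff.mp hd n

theorem adjoin_X_sub_eq_top {d : R[X]} (hd : IsNilpotent d) :
    Algebra.adjoin R {X - d} = ⊤ := by
  rw [← Algebra.toSubmodule_eq_top, eq_top_iff]
  refine Submodule.le_of_le_sup_smul_of_isNilpotent (isNilpotent_contentIdeal hd) fun p _ => ?_
  obtain ⟨q, hq⟩ := sub_dvd_aeval_sub X (X - d) p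
  rw [sub_sub_cancel, aeval_X_left_apply] at hq
  rw [← sub_add_cancel p (aeval (X - d) p), hq, add_comm, Ideal.smul_top_eq_map]
  refine Submodule.add_mem_sup (aeval_mem_adjoin_singleton R _) ?_
  exact Ideal.mul_mem_right _ _ (Ideal.mem_map_C_iff.mpr d.coeff_mem_contentIdeal)

theorem adjoin_sub_aeval_eq {A : Type*} [CommRing A] [Algebra R A] (y : A) {d : R[X]}
    (hd : IsNilpotent d) : Algebra.adjoin R {y - aeval y d} = Algebra.adjoin R {y} := by
  refine le_antisymm (Algebra.adjoin_singleton_le (Subalgebra.sub_mem _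
    (Algebra.self_mem_adjoin_singleton R y) (aeval_mem_adjoin_singleton R y))) ?_
  have hmap : (Algebra.adjoin R {X - d}).map (aeval y) = Algebra.adjoin R {y - aeval y d} := by
    rw [AlgHom.map_adjoin_singleton, map_sub, aeval_X]
  rw [← hmap, adjoin_X_sub_eq_top hd]
  exact Algebra.adjoin_singleton_le ⟨X, trivial, aeval_X y⟩

end Polynomial

/-- Theorem: if `R[f]` is a polynomial ring over `R` and `g` is nilpotent, then
`R[f,g]` is a polynomial ring over `R` if and only if `g ∈ R[f]`. -/
theorem adjoin_nilpotent_polynomial_ring_iff (R : Type*) [CommRing R] (f : R[X])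
    (hf : Function.Injective (Polynomial.aeval f : R[X] →ₐ[R] R[X]))
    (g : R[X]) (hg : IsNilpotent g) :
    (∃ y : R[X], Algebra.adjoin R ({f, g} : Set R[X]) = Algebra.adjoin R {y} ∧
      Function.Injective (Polynomial.aeval y : R[X] →ₐ[R] R[X])) ↔
    g ∈ Algebra.adjoin R ({f} : Set R[X]) := by
  constructor
  · rintro ⟨y, hy, hy_inj⟩
    have hy_mem : y ∈ Algebra.adjoin R ({g, f} : Set R[X]) := by
      rw [Set.pair_comm, hy]
      exact Algebra.self_mem_adjoin_singleton R y
    obtain ⟨a, ha, hya⟩ := Algebra.exists_sub_mem_of_mem_adjoin_insert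
      (J := nilradical R[X]) (mem_nilradical.mpr hg) hy_mem
    have hf_le : Algebra.adjoin R {f} ≤ Algebra.adjoin R {y} :=
      hy ▸ Algebra.adjoin_mono (Set.singleton_subset_iff.mpr (Set.mem_insert f {g}))
    obtain ⟨d, hd⟩ : ∃ d, aeval y d = y - a :=
      Algebra.adjoin_singleton_eq_range_aeval R y ▸
        Subalgebra.sub_mem _ (Algebra.self_mem_adjoin_singleton R y) (hf_le ha)
    have hd_nil : IsNilpotent d := (IsNilpotent.map_iff hy_inj).mp (hd ▸ hya)
    have hadj : Algebra.adjoin R {a} = Algebra.adjoin R {y} := by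
      rw [← adjoin_sub_aeval_eq y hd_nil, hd, sub_sub_cancel]
    have hg_mem : g ∈ Algebra.adjoin R {y} := hy ▸ Algebra.subset_adjoin (by simp)
    exact Algebra.adjoin_singleton_le ha (hadj ▸ hg_mem)
  · intro hg_mem
    refine ⟨f, le_antisymm ?_ (Algebra.adjoin_mono (Set.singleton_subset_iff.mpr
      (Set.mem_insert f {g}))), hf⟩
    exact Algebra.adjoin_le (Set.insert_subset (Algebra.self_mem_adjoin_singleton R f)
      (Set.singleton_subset_iff.mpr hg_mem))
end

section
/- Let R be a commutative ring and let f = a₀ + a₁x + ⋯ + a_n x^n ∈ R[x]. Then the R-algebra homomorphism R[x] → R[x] sending x to f is injective if and only if the annihilator in R of the ideal (a₁, …, a_n)R is zero, i.e., the only b ∈ R with b·a_i = 0 for all 1 ≤ i ≤ n is b = 0. -/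
/-!
Substituting `x ↦ x + a₀` is an automorphism of `R[x]`, so we may replace `f` by
`F = f - a₀`, which has no constant term. If `F` is a non-zero-divisor, a nonzero `g` with
`g(F) = 0` can be written `g = xᵐ q` with `q(0) ≠ 0`; then `Fᵐ q(F) = 0` forces `q(F) = 0`,
whose constant term is `q(0)`. Conversely, `b F = 0` means that `x ↦ F` kills `b x`.
By McCoy's theorem, `F` is a non-zero-divisor iff no nonzero `b ∈ R` has `b F = 0`, i.e.
`b aᵢ = 0` for all `i ≥ 1`.
-/

open Polynomial

open scoped nonZeroDivisors

namespace Polynomial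

theorem coeff_zero_comp_of_coeff_zero_eq_zero {R : Type*} [CommSemiring R] {p q : R[X]}
    (hq : q.coeff 0 = 0) : (p.comp q).coeff 0 = p.coeff 0 := by
  rw [coeff_zero_eq_eval_zero, coeff_zero_eq_eval_zero, eval_comp, ← coeff_zero_eq_eval_zero, hq]

variable {R : Type*} [CommRing R]

theorem aeval_sub_C_injective_iff (f : R[X]) (r : R) :
    Function.Injective (aeval (f - C r) : R[X] →ₐ[R] R[X]) ↔
      Function.Injective (aeval f : R[X] →ₐ[R] R[X]) := by
  have h : ⇑(aeval f : R[X] →ₐ[R] R[X]) = aeval (f - C r) ∘ taylor r := by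
    ext1 g
    simp only [Function.comp_apply, taylor_apply, ← comp_eq_aeval, comp_assoc, add_comp, X_comp,
      C_comp, sub_add_cancel]
  have hr : Function.Bijective (taylor r) := (taylorEquiv r).bijective
  rw [h, Function.Injective.of_comp_iff' _ hr]

theorem aeval_injective_of_mem_nonZeroDivisors {F : R[X]} (h0 : F.coeff 0 = 0)
    (hF : F ∈ R[X]⁰) : Function.Injective (aeval F : R[X] →ₐ[R] R[X]) := by
  rw [injective_iff_map_eq_zero]
  intro g hg
  by_contra hne
  obtain ⟨q, hgq, hX⟩ := exists_eq_pow_rootMultiplicity_mul_and_not_dvd g hne 0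
  rw [C_0, sub_zero, X_dvd_iff] at hX
  rw [hgq, C_0, sub_zero, map_mul, map_pow, aeval_X, mul_comm,
    mul_right_mem_nonZeroDivisors_eq_zero_iff (pow_mem hF _), ← comp_eq_aeval] at hg
  exact hX (coeff_zero_comp_of_coeff_zero_eq_zero h0 ▸ congrArg (coeff · 0) hg)

theorem mem_nonZeroDivisors_of_aeval_injective {F : R[X]}
    (hF : Function.Injective (aeval F : R[X] →ₐ[R] R[X])) : F ∈ R[X]⁰ := by
  refine Polynomial.mem_nonZeroDivisors_iff.mpr fun a ha => ?_
  have : a • (X : R[X]) = 0 := hF (by rw [map_smul, aeval_X, ha, map_zero])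
  simpa using congrArg (coeff · 1) this

theorem sub_C_coeff_zero_mem_nonZeroDivisors_iff (f : R[X]) :
    f - C (f.coeff 0) ∈ R[X]⁰ ↔ ∀ b : R, (∀ i : ℕ, 1 ≤ i → b * f.coeff i = 0) → b = 0 := by
  rw [Polynomial.mem_nonZeroDivisors_iff]
  refine forall_congr' fun b => imp_congr_left ?_
  rw [Polynomial.ext_iff]
  refine ⟨fun h i hi => ?_, fun h i => ?_⟩
  · simpa [coeff_C, Nat.one_le_iff_ne_zero.mp hi] using h i
  · rcases Nat.eq_zero_or_pos i with rfl | hi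
    · simp
    · simpa [coeff_C, hi.ne'] using h i hi

end Polynomial

/-- Theorem: for `f = a₀ + a₁x + ⋯ + aₙxⁿ ∈ R[x]`, the `R`-algebra endomorphism of `R[x]`
sending `x` to `f` is injective iff the annihilator of the ideal `(a₁, …, aₙ)R` is zero. -/
theorem aeval_injective_iff_annihilator_eq_zero (R : Type*) [CommRing R] (f : R[X]) :
    Function.Injective (Polynomial.aeval f : R[X] →ₐ[R] R[X]) ↔
      ∀ b : R, (∀ i : ℕ, 1 ≤ i → b * f.coeff i = 0) → b = 0 := by
  rw [← sub_C_coeff_zero_mem_nonZeroDivisors_iff, ← aeval_sub_C_injective_iff f (f.coeff 0)]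
  exact ⟨mem_nonZeroDivisors_of_aeval_injective,
    aeval_injective_of_mem_nonZeroDivisors (by simp)⟩
end

section
/- Let R = ℤ/4ℤ and let f be a nonzero nilpotent element of R[x]. Let α be the R-automorphism of R[x] defined by α(x) = x + f. Then α∘α is the identity but α is not the identity (so α has order 2), the ring of invariants R[x]^⟨α⟩ equals R[x², 2x], and R[x², 2x] is not a polynomial ring over R, i.e., there is no y ∈ R[x] with R[x², 2x] = R[y] and the R-algebra homomorphism R[x] → R[x] sending x to y injective. -/
open Polynomial

noncomputable abbrev r2 : ZMod 4 →+* ZMod 2 := ZMod.castHom (by norm_num : (2:ℕ) ∣ 4) (ZMod 2)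

lemma zmod4_aux : ∀ c : ZMod 4, (2 * c = 0 ↔ r2 c = 0) := by decide

lemma coeff_2mul (p : (ZMod 4)[X]) (n : ℕ) : (2 * p).coeff n = 2 * p.coeff n := by
  rw [two_mul, coeff_add, two_mul]

lemma tor_iff (p : (ZMod 4)[X]) : 2 * p = 0 ↔ p.map r2 = 0 := by
  constructor
  · intro h; ext n
    have h1 : 2 * p.coeff n = 0 := by rw [← coeff_2mul, h, coeff_zero]
    simpa [coeff_map] using (zmod4_aux _).mp h1
  · intro h; ext n
    rw [coeff_2mul, coeff_zero]
    apply (zmod4_aux _).mpr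
    have := congrArg (fun q => q.coeff n) h
    simpa [coeff_map] using this

noncomputable def hlf (p : (ZMod 4)[X]) : (ZMod 4)[X] :=
  ∑ n ∈ p.support, monomial n (if p.coeff n = 2 then 1 else 0)

lemma hlf_spec (p : (ZMod 4)[X]) (hp : 2 * p = 0) :
    2 * hlf p = p ∧ (p ≠ 0 → (hlf p).map r2 ≠ 0) := by
  have hco : ∀ n, 2 * p.coeff n = 0 := fun n => by rw [← coeff_2mul, hp, coeff_zero]
  have hC2 : (2 : (ZMod 4)[X]) = C 2 := (map_ofNat (C : ZMod 4 →+* (ZMod 4)[X]) 2).symm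
  constructor
  · rw [hlf, Finset.mul_sum]
    conv_rhs => rw [p.as_sum_support]
    refine Finset.sum_congr rfl fun n hn => ?_
    have h2 : p.coeff n = 2 := by
      have h3 := Polynomial.mem_support_iff.mp hn
      have h1 := hco n
      revert h1 h3; generalize p.coeff n = c; revert c; decide
    rw [h2, hC2, C_mul_monomial, if_pos rfl, mul_one]
  · intro hp0 h0
    obtain ⟨n, hn0⟩ := Polynomial.support_nonempty.mpr hp0
    have hn : p.coeff n ≠ 0 := Polynomial.mem_support_iff.mp hn0
    have h2 : p.coeff n = 2 := by
      have h1 := hco n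
      revert h1 hn; generalize p.coeff n = c; revert c; decide
    have hc : ((hlf p).map r2).coeff n = 0 := by rw [h0, coeff_zero]
    rw [coeff_map] at hc
    have hcc : (hlf p).coeff n = 1 := by
      rw [hlf, finset_sum_coeff]
      rw [Finset.sum_eq_single n (fun m _ hm => by rw [coeff_monomial, if_neg hm])
        (fun h => absurd (Polynomial.mem_support_iff.mpr (by rw [h2]; decide)) h)]
      rw [coeff_monomial, if_pos rfl, if_pos h2]
    rw [hcc] at hc
    exact absurd hc (by decide)

lemma mul_eq_zero_of_tor {p q : (ZMod 4)[X]} (hp : 2 * p = 0) (hq : 2 * q = 0) :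
    p * q = 0 := by
  have hp' : ∀ n, 2 * p.coeff n = 0 := fun n => by rw [← coeff_2mul, hp, coeff_zero]
  have hq' : ∀ n, 2 * q.coeff n = 0 := fun n => by rw [← coeff_2mul, hq, coeff_zero]
  ext n
  rw [coeff_mul, coeff_zero]
  refine Finset.sum_eq_zero fun x _ => ?_
  have key : ∀ a b : ZMod 4, 2 * a = 0 → 2 * b = 0 → a * b = 0 := by decide
  exact key _ _ (hp' x.1) (hq' x.2)

lemma pow_X_add_sq_zero {R : Type*} [CommRing R] (f : R[X]) (hf2 : f ^ 2 = 0) (n : ℕ) :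
    (X + f) ^ (n + 1) = X ^ (n + 1) + ((n : R[X]) + 1) * X ^ n * f := by
  induction n with
  | zero => norm_num
  | succ n ih =>
    have h : (X + f) ^ (n + 2) = (X + f) ^ (n + 1) * (X + f) := by ring
    rw [h, ih]
    push_cast
    linear_combination (((n : R[X]) + 1) * X ^ n) * hf2

lemma comp_X_add (f p : (ZMod 4)[X]) (hf2 : f ^ 2 = 0) :
    p.comp (X + f) = p + f * derivative p := by
  induction p using Polynomial.induction_on' with
  | add p q hp hq => rw [add_comp, hp, hq, derivative_add]; ring
  | monomial n a =>
    rw [monomial_comp, derivative_monomial]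
    cases n with
    | zero => simp
    | succ m =>
      rw [pow_X_add_sq_zero f hf2 m]
      rw [← C_mul_X_pow_eq_monomial, ← C_mul_X_pow_eq_monomial]
      simp only [Nat.add_sub_cancel, map_mul, C_eq_natCast]
      push_cast
      ring

/-- Theorem: over `R = ℤ/4ℤ`, if `f ≠ 0` is nilpotent and `α(x) = x + f`, then `α` has
order 2, the ring of invariants of `⟨α⟩` is `R[x², 2x]`, and `R[x², 2x]` is not a
polynomial ring over `R`. -/
theorem zmod4_alpha_f_invariants (f : (ZMod 4)[X]) (hf0 : f ≠ 0) (hf : IsNilpotent f)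
    (α : (ZMod 4)[X] ≃ₐ[ZMod 4] (ZMod 4)[X]) (hα : α X = X + f) :
    α * α = 1 ∧ α ≠ 1 ∧
    {g : (ZMod 4)[X] | ∀ σ ∈ Subgroup.zpowers α, σ g = g} =
      (Algebra.adjoin (ZMod 4) ({X ^ 2, 2 * X} : Set ((ZMod 4)[X])) : Set ((ZMod 4)[X])) ∧
    ¬ ∃ y : (ZMod 4)[X],
        Algebra.adjoin (ZMod 4) ({X ^ 2, 2 * X} : Set ((ZMod 4)[X])) =
          Algebra.adjoin (ZMod 4) {y} ∧
        Function.Injective (Polynomial.aeval y : (ZMod 4)[X] →ₐ[ZMod 4] (ZMod 4)[X]) := by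
  have hcoef : ∀ n, 2 * f.coeff n = 0 := by
    intro n
    obtain ⟨k, hk⟩ := (Polynomial.isNilpotent_iff.mp hf) n
    rcases (by decide : ∀ x : ZMod 4, 2 * x = 0 ∨ (x = 1 ∨ x = 3)) (f.coeff n) with h | h
    · exact h
    · exfalso
      rcases h with h | h <;> rw [h] at hk
      · simp at hk
        exact absurd hk (by decide)
      · rw [show (3 : ZMod 4) = -1 by decide] at hk
        rcases Nat.even_or_odd k with he | ho
        · rw [he.neg_one_pow] at hk; exact absurd hk (by decide)
        · rw [ho.neg_one_pow] at hk; exact (by decide : (-1 : ZMod 4) ≠ 0) hk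
  have h2f : 2 * f = 0 := by ext n; rw [coeff_2mul, coeff_zero]; exact hcoef n
  have hf2 : f ^ 2 = 0 := by rw [sq]; exact mul_eq_zero_of_tor h2f h2f
  have h2df : 2 * derivative f = 0 := by
    ext n; rw [coeff_2mul, coeff_zero, coeff_derivative]
    calc 2 * (f.coeff (n + 1) * (n + 1)) = (2 * f.coeff (n + 1)) * (n + 1) := by ring
    _ = 0 := by rw [hcoef]; ring
  have hfdf : f * derivative f = 0 := mul_eq_zero_of_tor h2f h2df
  have hαp : ∀ p : (ZMod 4)[X], α p = p + f * derivative p := by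
    intro p
    have hh : (α : (ZMod 4)[X] →ₐ[ZMod 4] (ZMod 4)[X]) = aeval (X + f) := by
      apply Polynomial.algHom_ext; simpa using hα
    have h2 : α p = aeval (X + f) p := by
      conv_lhs => rw [show (α p) = (α : (ZMod 4)[X] →ₐ[ZMod 4] (ZMod 4)[X]) p from rfl, hh]
    rw [h2, ← comp_eq_aeval, comp_X_add f p hf2]
  have h1 : α * α = 1 := by
    apply AlgEquiv.ext
    intro p
    show α (α p) = p
    rw [hαp, hαp, derivative_add, derivative_mul]
    linear_combination derivative p * h2f + derivative p * hfdf
      + derivative (derivative p) * hf2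
  have h2 : α ≠ 1 := by
    intro h
    rw [h, AlgEquiv.one_apply] at hα
    exact hf0 (by linear_combination -hα)
  have hX2 : α (X ^ 2) = X ^ 2 := by
    rw [map_pow, hα]; linear_combination X * h2f + hf2
  have h2Xf : α (2 * X) = 2 * X := by
    rw [map_mul, map_ofNat, hα]; linear_combination h2f
  have hfixed : ∀ g : (ZMod 4)[X], α g = g → ∀ σ ∈ Subgroup.zpowers α, σ g = g := by
    intro g hg σ hσ
    obtain ⟨k, rfl⟩ := hσ
    have hn : ∀ n : ℕ, (α ^ n) g = g := by
      intro n
      induction n with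
      | zero => rfl
      | succ n ih => rw [pow_succ, AlgEquiv.mul_apply, hg, ih]
    have hz : ∀ m : ℤ, (α ^ m) g = g := by
      intro m
      cases m with
      | ofNat n => rw [Int.ofNat_eq_coe, zpow_natCast]; exact hn n
      | negSucc n =>
        rw [zpow_negSucc]
        apply (α ^ (n + 1)).injective
        have hinv : (α ^ (n + 1)) (((α ^ (n + 1))⁻¹) g) = g := by
          rw [← AlgEquiv.mul_apply, mul_inv_cancel]; rfl
        rw [hinv, hn]
    exact hz k
  have h20 : (2 : (ZMod 2)[X]) = 0 := by
    rw [show (2 : (ZMod 2)[X]) = C 2 from (map_ofNat (C : ZMod 2 →+* (ZMod 2)[X]) 2).symm,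
      show (2 : ZMod 2) = 0 by decide, map_zero]
  refine ⟨h1, h2, ?_, ?_⟩
  · -- invariants = adjoin
    ext g
    simp only [Set.mem_setOf_eq, SetLike.mem_coe]
    constructor
    · intro hg
      have hg1 : α g = g := hg α (Subgroup.mem_zpowers α)
      have hfg : f * derivative g = 0 := by
        have h := hαp g
        rw [hg1] at h
        linear_combination -h
      obtain ⟨hh1, hh2⟩ := hlf_spec f h2f
      have ht : 2 * (hlf f * derivative g) = 0 := by
        linear_combination derivative g * hh1 + hfg
      have hm0 : (hlf f).map r2 * (derivative g).map r2 = 0 := by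
        rw [← Polynomial.map_mul]; exact (tor_iff _).mp ht
      have hdg : (derivative g).map r2 = 0 := by
        rcases mul_eq_zero.mp hm0 with h | h
        · exact absurd h (hh2 hf0)
        · exact h
      have h2dg : 2 * derivative g = 0 := (tor_iff _).mpr hdg
      have hodd : ∀ m, Odd m → 2 * g.coeff m = 0 := by
        intro m hm
        obtain ⟨k, hk⟩ := hm
        subst hk
        have hc : 2 * (derivative g).coeff (2 * k) = 0 := by
          rw [← coeff_2mul, h2dg, coeff_zero]
        rw [coeff_derivative] at hc
        push_cast at hc
        have hsq : (2 * (k : ZMod 4) + 1) ^ 2 = 1 := by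
          have h4 : (4 : ZMod 4) = 0 := by decide
          linear_combination ((k : ZMod 4) ^ 2 + (k : ZMod 4)) * h4
        linear_combination (2 * (k : ZMod 4) + 1) * hc
          - 2 * g.coeff (2 * k + 1) * hsq
      rw [g.as_sum_support]
      refine Subalgebra.sum_mem _ fun n hn => ?_
      rcases Nat.even_or_odd n with he | ho
      · obtain ⟨k, hk⟩ := he
        have hm : monomial n (g.coeff n) = C (g.coeff n) * (X ^ 2) ^ k := by
          rw [← pow_mul, show 2 * k = n by omega, C_mul_X_pow_eq_monomial]
        rw [hm, ← smul_eq_C_mul]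
        exact Subalgebra.smul_mem _
          (Subalgebra.pow_mem _ (Algebra.subset_adjoin (by simp)) k) _
      · obtain ⟨k, hk⟩ := ho
        subst hk
        have h2a := hodd (2 * k + 1) ⟨k, rfl⟩
        have ha : g.coeff (2 * k + 1) = 0 ∨ g.coeff (2 * k + 1) = 2 := by
          revert h2a; generalize g.coeff (2 * k + 1) = c; revert c; decide
        rcases ha with ha | ha
        · rw [ha]; simpa using zero_mem _
        · have hm : monomial (2 * k + 1) (g.coeff (2 * k + 1))
              = (2 * X) * (X ^ 2) ^ k := by
            rw [ha, ← C_mul_X_pow_eq_monomial,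
              show (C 2 : (ZMod 4)[X]) = 2 from map_ofNat C 2]
            ring
          rw [hm]
          exact Subalgebra.mul_mem _ (Algebra.subset_adjoin (by simp))
            (Subalgebra.pow_mem _ (Algebra.subset_adjoin (by simp)) k)
    · intro hg
      refine hfixed g ?_
      refine Algebra.adjoin_induction (fun x hx => ?_) (fun r => α.commutes r)
        (fun x y _ _ hx hy => by rw [map_add, hx, hy])
        (fun x y _ _ hx hy => by rw [map_mul, hx, hy]) hg
      simp only [Set.mem_insert_iff, Set.mem_singleton_iff] at hx
      rcases hx with rfl | rfl
      · exact hX2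
      · exact h2Xf
  · -- not a polynomial ring
    rintro ⟨y, hA, -⟩
    have hXnot : ∀ u : (ZMod 2)[X], (X : (ZMod 2)[X]) ≠ u.comp (X ^ 2) := by
      intro u hu
      have hd := congrArg natDegree hu
      rw [natDegree_X, natDegree_comp, natDegree_pow, natDegree_X] at hd
      omega
    have hmapA : ∀ a ∈ Algebra.adjoin (ZMod 4) ({X ^ 2, 2 * X} : Set ((ZMod 4)[X])),
        ∃ u : (ZMod 2)[X], a.map r2 = u.comp (X ^ 2) := by
      intro a ha
      have hmem : a.map r2 ∈ Algebra.adjoin (ZMod 2) ({X ^ 2} : Set ((ZMod 2)[X])) := by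
        refine Algebra.adjoin_induction (fun x hx => ?_) (fun r => ?_)
          (fun x y _ _ hx hy => ?_) (fun x y _ _ hx hy => ?_) ha
        · simp only [Set.mem_insert_iff, Set.mem_singleton_iff] at hx
          rcases hx with rfl | rfl
          · rw [Polynomial.map_pow, map_X]
            exact Algebra.subset_adjoin rfl
          · rw [Polynomial.map_mul, Polynomial.map_ofNat, map_X, h20, zero_mul]
            exact zero_mem _
        · rw [Polynomial.algebraMap_eq, map_C]
          exact Subalgebra.algebraMap_mem _ (r2 r)
        · rw [Polynomial.map_add]; exact add_mem hx hy
        · rw [Polynomial.map_mul]; exact mul_mem hx hy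
      rw [Algebra.adjoin_singleton_eq_range_aeval] at hmem
      obtain ⟨u, hu⟩ := hmem
      exact ⟨u, by rw [← hu]; rfl⟩
    have haev : ∀ s : (ZMod 4)[X],
        (aeval y s).map r2 = (s.map r2).comp (y.map r2) := by
      intro s; rw [← comp_eq_aeval, Polynomial.map_comp]
    have hyA : y ∈ Algebra.adjoin (ZMod 4) ({X ^ 2, 2 * X} : Set ((ZMod 4)[X])) := by
      rw [hA]; exact Algebra.self_mem_adjoin_singleton _ y
    have h2XA : (2 * X : (ZMod 4)[X]) ∈ Algebra.adjoin (ZMod 4) ({y} : Set ((ZMod 4)[X])) := by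
      rw [← hA]; exact Algebra.subset_adjoin (by simp)
    have hX2A : ((X : (ZMod 4)[X]) ^ 2) ∈ Algebra.adjoin (ZMod 4) ({y} : Set ((ZMod 4)[X])) := by
      rw [← hA]; exact Algebra.subset_adjoin (by simp)
    rw [Algebra.adjoin_singleton_eq_range_aeval] at h2XA hX2A
    obtain ⟨p, hp⟩ := h2XA
    obtain ⟨q, hq⟩ := hX2A
    replace hp : aeval y p = 2 * X := hp
    replace hq : aeval y q = X ^ 2 := hq
    by_cases hdeg : (y.map r2).natDegree = 0
    · have hyc : y.map r2 = C ((y.map r2).coeff 0) := eq_C_of_natDegree_eq_zero hdeg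
      have hq2 : ((X : (ZMod 4)[X]) ^ 2).map r2 = (q.map r2).comp (y.map r2) := by
        rw [← hq, haev]
      rw [hyc, comp_C] at hq2
      have hd := congrArg natDegree hq2
      rw [Polynomial.map_pow, map_X, natDegree_pow, natDegree_X, natDegree_C] at hd
      omega
    · have hp0 : (p.map r2).comp (y.map r2) = 0 := by
        rw [← haev, hp, Polynomial.map_mul, Polynomial.map_ofNat, h20, zero_mul]
      have hpm : p.map r2 = 0 := by
        rcases comp_eq_zero_iff.mp hp0 with h | ⟨-, hC⟩
        · exact h
        · exact absurd (by rw [hC, natDegree_C]) hdeg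
      obtain ⟨hs1, -⟩ := hlf_spec p ((tor_iff p).mpr hpm)
      have hw : 2 * ((X : (ZMod 4)[X]) - aeval y (hlf p)) = 0 := by
        have hthis := hp
        rw [← hs1, map_mul, map_ofNat] at hthis
        linear_combination -hthis
      have hXeq : (X : (ZMod 2)[X]) = (aeval y (hlf p)).map r2 := by
        have h0 := (tor_iff _).mp hw
        rw [Polynomial.map_sub, sub_eq_zero, map_X] at h0
        exact h0
      have hwA : aeval y (hlf p) ∈
          Algebra.adjoin (ZMod 4) ({X ^ 2, 2 * X} : Set ((ZMod 4)[X])) := by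
        rw [hA, Algebra.adjoin_singleton_eq_range_aeval]
        exact ⟨hlf p, rfl⟩
      obtain ⟨u', hu'⟩ := hmapA _ hwA
      exact hXnot u' (hXeq.trans hu')
end

section
/- Let R = ℤ/4ℤ and let θ be the R-automorphism of R[x] defined by θ(x) = x + 1. Then the ring of invariants R[x]^⟨θ⟩ equals R[w², 2w], where w = x·(x + 1). -/
/-!
Write `w = X * (X + 1)` and `θ = taylor 1`. Both `w ^ 2` and `2 * w` are `θ`-invariant because
`4 = 0`. Division by the monic invariant `w ^ 2` is unique, so it sends an invariant `f` to an
invariant quotient and remainder; by induction on the degree it remains to treat invariants of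
degree `< 4`. For those, comparing coefficients of `f (X + 1) = f X` forces
`f = a + b * (2 * w)`.
-/

open Polynomial

theorem AlgEquiv.forall_mem_zpowers_apply_eq_iff {R A : Type*} [CommSemiring R] [Semiring A]
    [Algebra R A] (θ : A ≃ₐ[R] A) (a : A) :
    (∀ σ ∈ Subgroup.zpowers θ, σ a = a) ↔ θ a = a :=
  ⟨fun h => h θ (Subgroup.mem_zpowers θ), fun h _ hσ =>
    Subgroup.zpowers_le.mpr (show θ ∈ MulAction.stabilizer _ a from h) hσ⟩

namespace Polynomial

variable {R : Type*} [CommRing R] {r : R} {f m : R[X]}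

theorem taylor_modByMonic_and_divByMonic_of_taylor_eq (hm : m.Monic) (hmr : taylor r m = m)
    (hf : taylor r f = f) :
    taylor r (f %ₘ m) = f %ₘ m ∧ taylor r (f /ₘ m) = f /ₘ m := by
  nontriviality R
  have hdiv : taylor r (f %ₘ m) + m * taylor r (f /ₘ m) = f :=
    calc taylor r (f %ₘ m) + m * taylor r (f /ₘ m)
        = taylor r (f %ₘ m + m * (f /ₘ m)) := by rw [map_add, taylor_mul, hmr]
      _ = f := by rw [modByMonic_add_div f m, hf]
  obtain ⟨hq, hr⟩ := div_modByMonic_unique _ _ hm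
    ⟨hdiv, degree_taylor (f %ₘ m) r ▸ degree_modByMonic_lt f hm⟩
  exact ⟨hr.symm, hq.symm⟩

theorem mem_of_taylor_eq_of_forall_natDegree_lt {S : Subalgebra R R[X]} (hm : m.Monic)
    (hm0 : 0 < m.natDegree) (hmr : taylor r m = m) (hmS : m ∈ S)
    (hlow : ∀ p : R[X], p.natDegree < m.natDegree → taylor r p = p → p ∈ S)
    (f : R[X]) (hf : taylor r f = f) : f ∈ S := by
  induction h : f.natDegree using Nat.strong_induction_on generalizing f with
  | _ n ih =>
  by_cases hfm : f.natDegree < m.natDegree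
  · exact hlow f hfm hf
  obtain ⟨hmod, hdiv⟩ := taylor_modByMonic_and_divByMonic_of_taylor_eq hm hmr hf
  have hm1 : m ≠ 1 := fun h1 => by simp [h1] at hm0
  rw [← modByMonic_add_div f m]
  refine add_mem (hlow _ (natDegree_modByMonic_lt f hm hm1) hmod) (mul_mem hmS ?_)
  exact ih _ (by rw [natDegree_divByMonic f hm]; omega) _ hdiv rfl

theorem coeff_taylor_eq_sum {n : ℕ} (hn : f.natDegree < n) (k : ℕ) :
    (taylor r f).coeff k = ∑ i ∈ Finset.range n, f.coeff i * r ^ (i - k) * (i.choose k : R) := by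
  conv_lhs => rw [as_sum_range' f n hn]
  simp [map_sum, taylor_monomial, coeff_X_add_C_pow, mul_assoc]

end Polynomial

namespace ZMod4

theorem four_eq_zero : (4 : (ZMod 4)[X]) = 0 := by
  rw [← C_ofNat, show (4 : ZMod 4) = 0 from rfl, map_zero]

theorem taylor_one_w_sq : taylor 1 ((X * (X + 1)) ^ 2 : (ZMod 4)[X]) = (X * (X + 1)) ^ 2 := by
  simp only [taylor_pow, taylor_mul, map_add, taylor_X, taylor_one, map_one]
  linear_combination (X + 1) ^ 3 * four_eq_zero

theorem taylor_one_two_mul_w :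
    taylor 1 (2 * (X * (X + 1)) : (ZMod 4)[X]) = 2 * (X * (X + 1)) := by
  simp only [two_mul, map_add, taylor_mul, taylor_X, taylor_one, map_one]
  linear_combination (X + 1) * four_eq_zero

theorem monic_w_sq : ((X * (X + 1)) ^ 2 : (ZMod 4)[X]).Monic := by monicity!

theorem natDegree_w_sq : ((X * (X + 1)) ^ 2 : (ZMod 4)[X]).natDegree = 4 := by
  have : Fact (1 < 4) := ⟨by norm_num⟩
  compute_degree!

theorem cubic_coeff_relations : ∀ a₁ a₂ a₃ : ZMod 4,
    a₁ + a₂ + a₃ = 0 → a₂ * 2 + a₃ * 3 = 0 → a₃ * 3 = 0 →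
      a₃ = 0 ∧ a₁ = a₂ ∧ ∃ b, a₂ = 2 * b := by
  decide

theorem exists_eq_C_add_C_mul_of_taylor_eq {p : (ZMod 4)[X]} (hp : p.natDegree < 4)
    (hinv : taylor 1 p = p) : ∃ a b : ZMod 4, p = C a + C b * (2 * (X * (X + 1))) := by
  have hcoeff k := hinv ▸ coeff_taylor_eq_sum (r := (1 : ZMod 4)) hp k
  have h0 := hcoeff 0
  have h1 := hcoeff 1
  have h2 := hcoeff 2
  simp only [Finset.sum_range_succ, Finset.sum_range_zero] at h0 h1 h2
  norm_num [Nat.choose] at h0 h1 h2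
  obtain ⟨h3, h12, b, hb⟩ := cubic_coeff_relations (p.coeff 1) (p.coeff 2) (p.coeff 3)
    (by linear_combination -h0) (by linear_combination -h1) h2
  refine ⟨p.coeff 0, b, ?_⟩
  conv_lhs => rw [as_sum_range' p 4 hp]
  simp only [Finset.sum_range_succ, Finset.sum_range_zero, ← C_mul_X_pow_eq_monomial, h3, h12,
    hb, C_mul, C_ofNat, C_0]
  ring

theorem taylor_one_eq_self_iff_mem_adjoin (g : (ZMod 4)[X]) :
    taylor 1 g = g ↔
      g ∈ Algebra.adjoin (ZMod 4) {(X * (X + 1)) ^ 2, 2 * (X * (X + 1))} := by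
  constructor
  · refine mem_of_taylor_eq_of_forall_natDegree_lt monic_w_sq (by rw [natDegree_w_sq]; norm_num)
      taylor_one_w_sq (Algebra.subset_adjoin (by simp)) (fun p hp hinv => ?_) g
    obtain ⟨a, b, rfl⟩ := exists_eq_C_add_C_mul_of_taylor_eq (hp.trans_eq natDegree_w_sq) hinv
    rw [← smul_eq_C_mul]
    exact add_mem (Subalgebra.algebraMap_mem _ a)
      (Subalgebra.smul_mem _ (Algebra.subset_adjoin (by simp)) b)
  · refine fun hg => Algebra.adjoin_le (S := AlgHom.equalizer (taylorAlgHom 1) (AlgHom.id _ _))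
      ?_ hg
    rintro p (rfl | rfl)
    · exact taylor_one_w_sq
    · exact taylor_one_two_mul_w

end ZMod4

/-- Theorem: over `R = ℤ/4ℤ`, for `θ(x) = x + 1` the ring of invariants of `⟨θ⟩`
is `R[w², 2w]` where `w = x·(x+1)`. -/
theorem zmod4_translation_invariants
    (θ : (ZMod 4)[X] ≃ₐ[ZMod 4] (ZMod 4)[X]) (hθ : θ X = X + 1) :
    {g : (ZMod 4)[X] | ∀ σ ∈ Subgroup.zpowers θ, σ g = g} =
      (Algebra.adjoin (ZMod 4)
        ({(X * (X + 1)) ^ 2, 2 * (X * (X + 1))} : Set ((ZMod 4)[X])) : Set ((ZMod 4)[X])) := by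
  obtain rfl : θ = taylorEquiv 1 :=
    AlgEquiv.coe_toAlgHom_injective (algHom_ext (by simpa using hθ))
  ext g
  exact (AlgEquiv.forall_mem_zpowers_apply_eq_iff _ g).trans
    (ZMod4.taylor_one_eq_self_iff_mem_adjoin g)
end

section
/- Let R = ℤ/4ℤ, let f be a nilpotent element of R[x], let β be the R-automorphism of R[x] defined by β(x) = -x + 1 + f, and let y = x·(-x + 1). Then the order of β is either 2 or 4, and the following are equivalent: (1) the order of β is 2; (2) f ∈ R[y]; (3) f = 2h for some h ∈ R[y]. -/
open Polynomial

private lemma two_torsion_coeff {p : (ZMod 4)[X]} (hp : 2 * p = 0) (i : ℕ) :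
    2 * p.coeff i = 0 := by
  have := congrArg (fun q => Polynomial.coeff q i) hp
  simpa [← map_ofNat (C : ZMod 4 →+* (ZMod 4)[X]) 2, coeff_C_mul] using this

private lemma torsion_of_coeff {p : (ZMod 4)[X]} (hp : ∀ i, 2 * p.coeff i = 0) :
    2 * p = 0 := by
  ext i
  simpa [← map_ofNat (C : ZMod 4 →+* (ZMod 4)[X]) 2, coeff_C_mul] using hp i

private lemma exists_half {p : (ZMod 4)[X]} (hp : 2 * p = 0) : ∃ g, p = 2 * g := by
  refine ⟨p.sum fun n a => C (if a = 2 then 1 else 0) * X ^ n, ?_⟩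
  conv_lhs => rw [← Polynomial.sum_C_mul_X_pow_eq p]
  rw [Polynomial.sum_def, Polynomial.sum_def, Finset.mul_sum]
  refine Finset.sum_congr rfl fun n hn => ?_
  have h1 : p.coeff n ≠ 0 := Polynomial.mem_support_iff.mp hn
  have h2 : 2 * p.coeff n = 0 := two_torsion_coeff hp n
  have h3 : p.coeff n = 2 := by
    have : ∀ a : ZMod 4, a ≠ 0 → 2 * a = 0 → a = 2 := by decide
    exact this _ h1 h2
  rw [h3, ← mul_assoc, ← map_ofNat (C : ZMod 4 →+* (ZMod 4)[X]) 2, ← map_mul]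
  norm_num

private lemma comp_add_torsion {p e : (ZMod 4)[X]} (s : (ZMod 4)[X])
    (hp : 2 * p = 0) (he : 2 * e = 0) : p.comp (s + e) = p.comp s := by
  obtain ⟨g, rfl⟩ := exists_half hp
  obtain ⟨r, hr⟩ : e ∣ g.comp (s + e) - g.comp s := by
    have := Polynomial.sub_dvd_eval_sub (s + e) s (g.map C)
    simpa [Polynomial.comp, Polynomial.eval₂_eq_eval_map] using this
  have h2c : ((2 : (ZMod 4)[X])).comp (s + e) = 2 := by
    rw [← map_ofNat (C : ZMod 4 →+* (ZMod 4)[X]) 2, C_comp]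
  have h2c' : ((2 : (ZMod 4)[X])).comp s = 2 := by
    rw [← map_ofNat (C : ZMod 4 →+* (ZMod 4)[X]) 2, C_comp]
  have key : (2 * g).comp (s + e) - (2 * g).comp s = 2 * (e * r) := by
    simp only [Polynomial.mul_comp, h2c, h2c']
    rw [← mul_sub, hr]
  linear_combination key + r * he

private lemma two_mul_pow_add {c : (ZMod 4)[X]} (b : (ZMod 4)[X]) (hc : 2 * c = 0) :
    ∀ m : ℕ, 2 * (b + c) ^ m = 2 * b ^ m := by
  intro m
  induction m with
  | zero => rfl
  | succ m ih =>
    rw [pow_succ, pow_succ, ← mul_assoc, ← mul_assoc, ih]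
    ring_nf
    linear_combination (b ^ m : (ZMod 4)[X]) * hc

private lemma adjoin_fixed {p : (ZMod 4)[X]}
    (hp : p ∈ Algebra.adjoin (ZMod 4) ({X * (-X + 1)} : Set ((ZMod 4)[X]))) :
    p.comp (-X + 1) = p := by
  induction hp using Algebra.adjoin_induction with
  | mem x hx =>
    rw [Set.mem_singleton_iff] at hx
    subst hx
    simp only [mul_comp, neg_comp, add_comp, X_comp, one_comp]
    ring
  | algebraMap r => simp [Polynomial.algebraMap_eq]
  | add x y hx hy ihx ihy => simp [add_comp, ihx, ihy]
  | mul x y hx hy ihx ihy => simp [mul_comp, ihx, ihy]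

private lemma parity_even {f : (ZMod 4)[X]} (hf0 : f ≠ 0) (h2 : 2 * f = 0)
    (hinv : f.comp (X + 1) = f) : Even f.natDegree := by
  set N := f.natDegree with hN
  rcases Nat.eq_zero_or_pos N with h0 | hpos
  · simp [h0]
  have htay : Polynomial.taylor 1 f = f := by
    rw [Polynomial.taylor_apply]
    simpa using hinv
  have hc := congrArg (fun p => Polynomial.coeff p (N - 1)) htay
  simp only [Polynomial.taylor_coeff] at hc
  set H := Polynomial.hasseDeriv (N - 1) f with hH
  have hdeg : H.natDegree < 2 := by
    have h := Polynomial.natDegree_hasseDeriv_le f (N - 1)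
    rw [← hH] at h
    omega
  have heval : H.eval 1 = H.coeff 0 + H.coeff 1 := by
    rw [Polynomial.eval_eq_sum_range' hdeg]
    simp [Finset.sum_range_succ]
  have hc0 : H.coeff 0 = f.coeff (N - 1) := by
    rw [hH, Polynomial.hasseDeriv_coeff]
    simp
  have hc1 : H.coeff 1 = (N : ZMod 4) * f.coeff N := by
    rw [hH, Polynomial.hasseDeriv_coeff]
    have h1 : 1 + (N - 1) = N := by omega
    rw [h1]
    congr 1
    have : N.choose (N - 1) = N := by
      rw [Nat.choose_symm (by omega : 1 ≤ N), Nat.choose_one_right]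
    exact_mod_cast congrArg (Nat.cast : ℕ → ZMod 4) this
  have hfN : f.coeff N = 2 := by
    have h1 : f.coeff N ≠ 0 := by
      rw [hN]; exact Polynomial.leadingCoeff_ne_zero.mpr hf0
    have h2' : 2 * f.coeff N = 0 := two_torsion_coeff h2 N
    have : ∀ a : ZMod 4, a ≠ 0 → 2 * a = 0 → a = 2 := by decide
    exact this _ h1 h2'
  rw [heval, hc0, hc1, hfN] at hc
  have hNz : (N : ZMod 4) * 2 = 0 := by linear_combination hc
  have : ((2 * N : ℕ) : ZMod 4) = 0 := by push_cast; linear_combination hNz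
  have hdvd : (4 : ℕ) ∣ 2 * N := (ZMod.natCast_eq_zero_iff _ 4).mp this
  obtain ⟨k, hk⟩ := hdvd
  exact ⟨k, by omega⟩

private lemma two_two_zero : (2 : (ZMod 4)[X]) * 2 = 0 := by
  rw [← map_ofNat (C : ZMod 4 →+* (ZMod 4)[X]) 2, ← map_mul]
  have : ((2 : ZMod 4) * 2) = 0 := by decide
  rw [this, map_zero]

private lemma main_ind : ∀ n : ℕ, ∀ f : (ZMod 4)[X], f.natDegree < n → 2 * f = 0 →
    f.comp (X + 1) = f →
    ∃ h ∈ Algebra.adjoin (ZMod 4) ({X * (-X + 1)} : Set ((ZMod 4)[X])), f = 2 * h := by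
  intro n
  induction n with
  | zero => exact fun f h => absurd h (Nat.not_lt_zero _)
  | succ n ih =>
    intro f hd h2 hinv
    by_cases hf0 : f = 0
    · exact ⟨0, Subalgebra.zero_mem _, by simp [hf0]⟩
    obtain ⟨m, hm⟩ := parity_even hf0 h2 hinv
    have hbase : ((X : (ZMod 4)[X]) ^ 2 - X).Monic :=
      Polynomial.monic_X_pow_sub (lt_of_le_of_lt Polynomial.degree_X_le (by norm_num))
    have hbdeg : ((X : (ZMod 4)[X]) ^ 2 - X).natDegree = 2 := by
      compute_degree!
    set M : (ZMod 4)[X] := (X ^ 2 - X) ^ m with hMdef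
    have hMmonic : M.Monic := hbase.pow m
    have hMdeg : M.natDegree = 2 * m := by
      rw [hMdef, hbase.natDegree_pow, hbdeg]
      ring
    set t : (ZMod 4)[X] := 2 * M with htdef
    have hlt : t.leadingCoeff = 2 := by
      rw [htdef, Polynomial.leadingCoeff_mul_monic hMmonic,
        ← map_ofNat (C : ZMod 4 →+* (ZMod 4)[X]) 2, Polynomial.leadingCoeff_C]
    have haf : f.leadingCoeff = 2 := by
      have h1 : f.leadingCoeff ≠ 0 := Polynomial.leadingCoeff_ne_zero.mpr hf0
      have h2' : 2 * f.leadingCoeff = 0 := two_torsion_coeff h2 _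
      have hall : ∀ a : ZMod 4, a ≠ 0 → 2 * a = 0 → a = 2 := by decide
      exact hall _ h1 h2'
    haveI : Nontrivial (ZMod 4) := ⟨0, 1, by decide⟩
    have hNdeg : f.natDegree = 2 * m := by omega
    have hdt : t.degree = f.degree := by
      rw [htdef, hMmonic.degree_mul, ← map_ofNat (C : ZMod 4 →+* (ZMod 4)[X]) 2,
        Polynomial.degree_C (by decide : (2 : ZMod 4) ≠ 0), zero_add,
        Polynomial.degree_eq_natDegree hMmonic.ne_zero,
        Polynomial.degree_eq_natDegree hf0, hMdeg, hNdeg]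
    have h2t : 2 * t = 0 := by rw [htdef, ← mul_assoc, two_two_zero, zero_mul]
    have htinv : t.comp (X + 1) = t := by
      rw [htdef, Polynomial.mul_comp]
      have h2comp : ((2 : (ZMod 4)[X])).comp (X + 1) = 2 := by
        rw [← map_ofNat (C : ZMod 4 →+* (ZMod 4)[X]) 2, C_comp]
      rw [h2comp, hMdef, Polynomial.pow_comp]
      have hXc : ((X : (ZMod 4)[X]) ^ 2 - X).comp (X + 1) = (X ^ 2 - X) + 2 * X := by
        simp only [sub_comp, pow_comp, X_comp]
        ring
      rw [hXc]
      exact two_mul_pow_add _ (by linear_combination (X : (ZMod 4)[X]) * two_two_zero) m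
    have hMadj : M ∈ Algebra.adjoin (ZMod 4) ({X * (-X + 1)} : Set ((ZMod 4)[X])) := by
      rw [hMdef]
      apply pow_mem
      have hXy : ((X : (ZMod 4)[X]) ^ 2 - X) = -(X * (-X + 1)) := by ring
      rw [hXy]
      exact neg_mem (Algebra.subset_adjoin (Set.mem_singleton _))
    set f' : (ZMod 4)[X] := f - t with hf'def
    by_cases hf'0 : f' = 0
    · refine ⟨M, hMadj, ?_⟩
      have hft : f = t := by rwa [hf'def, sub_eq_zero] at hf'0
      rw [hft]
    · have hdeg' : f'.degree < f.degree :=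
        Polynomial.degree_sub_lt hdt.symm hf0 (by rw [haf, hlt])
      have hnd : f'.natDegree < n :=
        lt_of_lt_of_le (Polynomial.natDegree_lt_natDegree hf'0 hdeg') (by omega)
      have h2f' : 2 * f' = 0 := by rw [hf'def, mul_sub, h2, h2t, sub_zero]
      have hinv' : f'.comp (X + 1) = f' := by
        rw [hf'def, Polynomial.sub_comp, hinv, htinv]
      obtain ⟨h', hh', hEq⟩ := ih f' hnd h2f' hinv'
      refine ⟨h' + M, add_mem hh' hMadj, ?_⟩
      rw [hf'def, htdef] at hEq
      linear_combination hEq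

private lemma algHom_comp (φ : (ZMod 4)[X] →ₐ[ZMod 4] (ZMod 4)[X]) (p : (ZMod 4)[X]) :
    φ p = p.comp (φ X) := by
  conv_lhs => rw [← Polynomial.aeval_X_left_apply p]
  rw [← Polynomial.aeval_algHom_apply, Polynomial.aeval_def, Polynomial.algebraMap_eq]
  rfl

private lemma equiv_apply (u : (ZMod 4)[X] ≃ₐ[ZMod 4] (ZMod 4)[X]) (p : (ZMod 4)[X]) :
    u p = p.comp (u X) :=
  algHom_comp u.toAlgHom p

private lemma equiv_ext {u v : (ZMod 4)[X] ≃ₐ[ZMod 4] (ZMod 4)[X]} (h : u X = v X) : u = v := by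
  apply AlgEquiv.ext
  intro p
  rw [equiv_apply u, equiv_apply v, h]

private lemma nilp_two (a : ZMod 4) (h : IsNilpotent a) : 2 * a = 0 := by
  obtain ⟨k, hk⟩ := h
  have h3 : ∀ j : ℕ, (3 : ZMod 4) ^ j = 1 ∨ (3 : ZMod 4) ^ j = 3 := by
    intro j
    induction j with
    | zero => left; rfl
    | succ j ih =>
      rcases ih with h | h <;> rw [pow_succ, h] <;> [right; left] <;> decide
  have hone : ∀ j : ℕ, (1 : ZMod 4) ^ j = 1 := fun j => one_pow j
  have hall : ∀ b : ZMod 4, b = 0 ∨ b = 1 ∨ b = 2 ∨ b = 3 := by decide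
  rcases hall a with rfl | rfl | rfl | rfl
  · decide
  · rw [hone] at hk; exact absurd hk (by decide)
  · decide
  · rcases h3 k with h | h <;> rw [h] at hk <;> exact absurd hk (by decide)

/-- Theorem: over `R = ℤ/4ℤ`, for nilpotent `f` and `β(x) = -x + 1 + f`, the order of `β`
is 2 or 4, and the order is 2 iff `f ∈ R[y]` iff `f = 2h` for some `h ∈ R[y]`,
where `y = x·(-x+1)`. -/
theorem zmod4_beta_f_order (f : (ZMod 4)[X]) (hf : IsNilpotent f)
    (β : (ZMod 4)[X] ≃ₐ[ZMod 4] (ZMod 4)[X]) (hβ : β X = -X + 1 + f) :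
    (orderOf β = 2 ∨ orderOf β = 4) ∧
    (orderOf β = 2 ↔ f ∈ Algebra.adjoin (ZMod 4) ({X * (-X + 1)} : Set ((ZMod 4)[X]))) ∧
    (orderOf β = 2 ↔
      ∃ h ∈ Algebra.adjoin (ZMod 4) ({X * (-X + 1)} : Set ((ZMod 4)[X])), f = 2 * h) := by
  have h2f : 2 * f = 0 :=
    torsion_of_coeff fun i => nilp_two _ ((Polynomial.isNilpotent_iff.mp hf) i)
  have h2comp : ∀ q : (ZMod 4)[X], ((2 : (ZMod 4)[X])).comp q = 2 := fun q => by
    rw [← map_ofNat (C : ZMod 4 →+* (ZMod 4)[X]) 2, C_comp]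
  have hβ_app : ∀ p : (ZMod 4)[X], β p = p.comp (-X + 1 + f) := fun p => by
    rw [equiv_apply β p, hβ]
  set d : (ZMod 4)[X] := f.comp (-X + 1) - f with hddef
  have h2fc : 2 * f.comp (-X + 1) = 0 := by
    have := congrArg (fun q => Polynomial.comp q (-X + 1)) h2f
    simpa [Polynomial.mul_comp, h2comp] using this
  have h2d : 2 * d = 0 := by rw [hddef, mul_sub, h2f, h2fc, sub_zero]
  have hβ2X : (β * β) X = X + d := by
    rw [AlgEquiv.mul_apply, hβ, map_add, map_add, map_neg, map_one, hβ, hβ_app f,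
      comp_add_torsion _ h2f h2f, hddef]
    ring
  have hβ4 : β ^ 4 = 1 := by
    have hp4 : β ^ 4 = (β * β) * (β * β) := by rw [← sq, ← sq, ← pow_mul]
    apply equiv_ext
    rw [hp4, AlgEquiv.mul_apply, hβ2X, map_add, hβ2X, equiv_apply (β * β) d, hβ2X,
      comp_add_torsion _ h2d h2d, Polynomial.comp_X, AlgEquiv.one_apply]
    linear_combination h2d
  have hβne : β ≠ 1 := by
    intro h
    have hX : β X = X := by rw [h, AlgEquiv.one_apply]
    rw [hβ] at hX
    have hfX : f = 2 * X - 1 := by linear_combination hX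
    have h0 : (2 : (ZMod 4)[X]) = 0 := by
      linear_combination -h2f + 2 * hfX + X * two_two_zero
    have := congrArg (fun q => Polynomial.coeff q 0) h0
    simp [← map_ofNat (C : ZMod 4 →+* (ZMod 4)[X]) 2] at this
    exact absurd this (by decide)
  have ho4 : orderOf β ∣ 4 := orderOf_dvd_of_pow_eq_one hβ4
  have ho1 : orderOf β ≠ 1 := fun h => hβne (orderOf_eq_one_iff.mp h)
  have h24 : orderOf β = 2 ∨ orderOf β = 4 := by
    obtain ⟨i, hi2, hio⟩ := (Nat.dvd_prime_pow Nat.prime_two).mp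
      (show orderOf β ∣ 2 ^ 2 by norm_num; exact ho4)
    interval_cases i
    · exact absurd (by simpa using hio) ho1
    · left; simpa using hio
    · right; simpa using hio
  have hcrit : orderOf β = 2 ↔ d = 0 := by
    constructor
    · intro h
      have hpow : β ^ 2 = 1 := by rw [← h]; exact pow_orderOf_eq_one β
      rw [pow_two] at hpow
      have hX := congrArg (fun e : (ZMod 4)[X] ≃ₐ[ZMod 4] (ZMod 4)[X] => e X) hpow
      simp only [AlgEquiv.one_apply] at hX
      rw [hβ2X] at hX
      linear_combination hX
    · intro h
      have hXeq : (β * β) X = X := by rw [hβ2X, h, add_zero]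
      have hpow : β ^ 2 = 1 := by
        rw [pow_two]
        exact equiv_ext (by rw [hXeq, AlgEquiv.one_apply])
      have hdvd2 : orderOf β ∣ 2 := orderOf_dvd_of_pow_eq_one hpow
      rcases (Nat.dvd_prime Nat.prime_two).mp hdvd2 with h1 | h2
      · exact absurd h1 ho1
      · exact h2
  have hd0 : d = 0 ↔ f.comp (-X + 1) = f := by rw [hddef, sub_eq_zero]
  have hE3 : f.comp (-X + 1) = f ↔
      ∃ h ∈ Algebra.adjoin (ZMod 4) ({X * (-X + 1)} : Set ((ZMod 4)[X])), f = 2 * h := by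
    constructor
    · intro hfi
      have hrw : (-X + 1 : (ZMod 4)[X]) = (X + 1) + 2 * (-X) := by ring
      rw [hrw, comp_add_torsion _ h2f
        (by linear_combination (-X : (ZMod 4)[X]) * two_two_zero)] at hfi
      exact main_ind (f.natDegree + 1) f (Nat.lt_succ_self _) h2f hfi
    · rintro ⟨h, hh, rfl⟩
      rw [Polynomial.mul_comp, h2comp, adjoin_fixed hh]
  have hE2 : f ∈ Algebra.adjoin (ZMod 4) ({X * (-X + 1)} : Set ((ZMod 4)[X])) ↔
      ∃ h ∈ Algebra.adjoin (ZMod 4) ({X * (-X + 1)} : Set ((ZMod 4)[X])), f = 2 * h := by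
    constructor
    · intro hfa
      exact hE3.mp (adjoin_fixed hfa)
    · rintro ⟨h, hh, rfl⟩
      have : (2 : (ZMod 4)[X]) * h = h + h := by ring
      rw [this]
      exact add_mem hh hh
  refine ⟨h24, ?_, ?_⟩
  · rw [hcrit, hd0]
    exact hE3.trans hE2.symm
  · rw [hcrit, hd0]
    exact hE3
end

section
/- Let R = ℤ/4ℤ, let f be a nilpotent element of R[x], let β be the R-automorphism of R[x] defined by β(x) = -x + 1 + f, and let y = x·(-x + 1). If β has order 4 (equivalently, β∘β is not the identity), then the ring of invariants R[x]^⟨β⟩ equals R[y², 2y]. -/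
open Polynomial

/-!
Modulo 2, `β` becomes the translation `τ : X ↦ X + 1` of `𝔽₂[X]` and `y` becomes `w = X (X + 1)`.
Writing any polynomial as `a(w) + X b(w)`, `τ - 1` sends it to `b(w)`, so the `τ`-invariants are
exactly `𝔽₂[w]` and an invariant `g` has the form `Q(y) + 2q`. As `f = 2h` squares to zero,
`β (Q(y)) = Q(y) + Q'(y) f`, and invariance of `g` reduces modulo 2 to
`Q̄'(w) h̄ + (τ - 1) q̄ = 0`. Since `τ² = 1` in characteristic 2, applying `τ` gives
`Q̄'(w) (τ - 1) h̄ = 0`, and `(τ - 1) h̄ ≠ 0` because otherwise `β² = 1`. Hence `Q̄' = 0`, i.e. the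
odd coefficients of `Q` are even, and `q̄ ∈ 𝔽₂[w]`; together these put `g` in `R[y², 2y]`.
-/

lemma aeval_mem_adjoin_sq_two_mul {R A : Type*} [CommSemiring R] [CommSemiring A] [Algebra R A]
    (y : A) {P : R[X]} (hP : ∀ n, Odd n → 2 ∣ P.coeff n) :
    aeval y P ∈ Algebra.adjoin R {y ^ 2, 2 * y} := by
  have hsq : y ^ 2 ∈ Algebra.adjoin R {y ^ 2, 2 * y} := Algebra.subset_adjoin (by simp)
  have htwo : 2 * y ∈ Algebra.adjoin R {y ^ 2, 2 * y} := Algebra.subset_adjoin (by simp)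
  rw [aeval_eq_sum_range]
  refine Subalgebra.sum_mem _ fun n _ => ?_
  obtain ⟨m, rfl | rfl⟩ := Nat.even_or_odd' n
  · rw [pow_mul]
    exact Subalgebra.smul_mem _ (pow_mem hsq m) _
  · obtain ⟨c, hc⟩ := hP _ (odd_two_mul_add_one m)
    have : P.coeff (2 * m + 1) • y ^ (2 * m + 1) = c • ((y ^ 2) ^ m * (2 * y)) := by
      simp only [hc, Algebra.smul_def, map_mul, map_ofNat]
      ring
    rw [this]
    exact Subalgebra.smul_mem _ (mul_mem (pow_mem hsq m) htwo) _

lemma algHom_apply_eq_comp {R F : Type*} [CommSemiring R] [FunLike F R[X] R[X]]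
    [AlgHomClass F R R[X] R[X]] (φ : F) (p : R[X]) : φ p = p.comp (φ X) := by
  rw [comp_eq_aeval, aeval_algHom_apply, aeval_X_left_apply]

lemma two_dvd_iff_forall_two_dvd_coeff {R : Type*} [Semiring R] {p : R[X]} :
    2 ∣ p ↔ ∀ n, 2 ∣ p.coeff n := by
  rw [← C_dvd_iff_dvd_coeff, map_ofNat]

section OrbitProd

variable {K : Type*} [CommRing K]

variable (K) in
noncomputable def orbitProd : K[X] := X * (X + 1)

lemma orbitProd_monic : (orbitProd K).Monic :=
  monic_X.mul (by simpa using monic_X_add_C (1 : K))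

lemma natDegree_orbitProd [Nontrivial K] :
    (orbitProd K).natDegree = 2 := by
  unfold orbitProd; compute_degree!

lemma exists_eq_comp_orbitProd_add_X_mul (p : K[X]) :
    ∃ a b : K[X], p = a.comp (orbitProd K) + X * b.comp (orbitProd K) := by
  nontriviality K
  induction hn : p.natDegree using Nat.strong_induction_on generalizing p with
  | _ n ih =>
    by_cases hp : p.natDegree ≤ 1
    · refine ⟨C (p.coeff 0), C (p.coeff 1), ?_⟩
      rw [C_comp, C_comp, mul_comm, add_comm]
      exact eq_X_add_C_of_natDegree_le_one hp
    obtain ⟨a, b, hab⟩ := ih (p /ₘ orbitProd K).natDegree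
      (by rw [natDegree_divByMonic _ orbitProd_monic, natDegree_orbitProd]; omega) _ rfl
    have hr : (p %ₘ orbitProd K).natDegree ≤ 1 := by
      have := natDegree_modByMonic_lt p orbitProd_monic
        fun h => by simpa [h] using (natDegree_orbitProd (K := K))
      rw [natDegree_orbitProd] at this; omega
    refine ⟨X * a + C ((p %ₘ orbitProd K).coeff 0), X * b + C ((p %ₘ orbitProd K).coeff 1), ?_⟩
    conv_lhs => rw [← modByMonic_add_div p (orbitProd K), hab,
      eq_X_add_C_of_natDegree_le_one hr]
    simp only [add_comp, mul_comp, X_comp, C_comp]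
    ring

lemma comp_orbitProd_eq_zero_iff [IsDomain K] {a : K[X]} :
    a.comp (orbitProd K) = 0 ↔ a = 0 := by
  refine ⟨fun h => ?_, fun h => by rw [h, zero_comp]⟩
  refine (comp_eq_zero_iff.mp h).resolve_right fun ⟨_, hC⟩ => ?_
  simpa [natDegree_orbitProd] using congrArg natDegree hC

variable [CharP K 2]

lemma comp_X_add_one_comp_X_add_one (p : K[X]) : (p.comp (X + 1)).comp (X + 1) = p := by
  rw [comp_assoc, add_comp, X_comp, one_comp, add_assoc, one_add_one_eq_two,
    CharTwo.two_eq_zero, add_zero, comp_X]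

lemma orbitProd_comp_X_add_one : (orbitProd K).comp (X + 1) = orbitProd K := by
  simp only [orbitProd, mul_comp, add_comp, X_comp, one_comp]
  linear_combination (X + 1) * (CharTwo.two_eq_zero : (2 : K[X]) = 0)

lemma comp_X_add_one_eq_self_iff [IsDomain K] {p : K[X]} :
    p.comp (X + 1) = p ↔ ∃ a : K[X], p = a.comp (orbitProd K) := by
  constructor
  · intro hp
    obtain ⟨a, b, rfl⟩ := exists_eq_comp_orbitProd_add_X_mul p
    have hb : b.comp (orbitProd K) = 0 := by
      rw [add_comp, mul_comp, X_comp, comp_assoc, comp_assoc, orbitProd_comp_X_add_one] at hp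
      linear_combination hp
    exact ⟨a, by rw [comp_orbitProd_eq_zero_iff.mp hb, zero_comp, mul_zero, add_zero]⟩
  · rintro ⟨a, rfl⟩
    rw [comp_assoc, orbitProd_comp_X_add_one]

lemma eq_zero_of_mul_add_comp_X_add_one_sub_eq_zero [IsDomain K] {c u v : K[X]}
    (hc : c.comp (X + 1) = c) (hu : u.comp (X + 1) ≠ u)
    (h : c * u + (v.comp (X + 1) - v) = 0) : c = 0 := by
  have h' : c * u.comp (X + 1) + (v - v.comp (X + 1)) = 0 := by
    have := congrArg (fun q : K[X] => q.comp (X + 1)) h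
    simpa only [add_comp, mul_comp, sub_comp, hc, comp_X_add_one_comp_X_add_one, zero_comp]
      using this
  have hsum : c * (u.comp (X + 1) - u) = 0 := by
    linear_combination h + h' - c * u * (CharTwo.two_eq_zero : (2 : K[X]) = 0)
  exact (mul_eq_zero.mp hsum).resolve_right (sub_ne_zero.mpr hu)

end OrbitProd

def modTwo : ZMod 4 →+* ZMod 2 := ZMod.castHom (by norm_num) (ZMod 2)

lemma modTwo_eq_zero_iff (c : ZMod 4) : modTwo c = 0 ↔ 2 ∣ c := by
  revert c; decide

lemma map_modTwo_eq_zero_iff {p : (ZMod 4)[X]} : p.map modTwo = 0 ↔ 2 ∣ p := by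
  simp only [Polynomial.ext_iff, coeff_map, coeff_zero, modTwo_eq_zero_iff,
    two_dvd_iff_forall_two_dvd_coeff]

lemma two_mul_eq_zero_iff {p : (ZMod 4)[X]} : 2 * p = 0 ↔ 2 ∣ p := by
  have key : ∀ c : ZMod 4, 2 * c = 0 ↔ 2 ∣ c := by decide
  simp only [Polynomial.ext_iff, coeff_ofNat_mul, coeff_zero, key,
    two_dvd_iff_forall_two_dvd_coeff]

lemma map_modTwo_surjective : Function.Surjective (Polynomial.map modTwo) :=
  map_surjective _ (ZMod.castHom_surjective _)

lemma two_dvd_of_isNilpotent {f : (ZMod 4)[X]} (hf : IsNilpotent f) : 2 ∣ f :=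
  map_modTwo_eq_zero_iff.mp (hf.map (mapRingHom modTwo)).eq_zero

lemma two_dvd_coeff_of_derivative_map_modTwo_eq_zero {P : (ZMod 4)[X]}
    (hP : derivative (P.map modTwo) = 0) {n : ℕ} (hn : Odd n) : 2 ∣ P.coeff n := by
  obtain ⟨m, rfl⟩ := hn
  have := congrArg (coeff · (2 * m)) hP
  have hodd : ((2 * m : ℕ) : ZMod 2) + 1 = 1 := by
    rw [Nat.cast_mul, ZMod.natCast_self, zero_mul, zero_add]
  rwa [coeff_derivative, coeff_map, coeff_zero, hodd, mul_one, modTwo_eq_zero_iff] at this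

lemma map_modTwo_X_mul_neg_X_add_one :
    (X * (-X + 1) : (ZMod 4)[X]).map modTwo = orbitProd (ZMod 2) := by
  simp only [Polynomial.map_mul, Polynomial.map_add, Polynomial.map_neg, Polynomial.map_one,
    map_X, orbitProd, CharTwo.neg_eq]

lemma exists_eq_comp_add_two_mul {g : (ZMod 4)[X]}
    (hg : (g.map modTwo).comp (X + 1) = g.map modTwo) :
    ∃ Q q : (ZMod 4)[X], g = Q.comp (X * (-X + 1)) + 2 * q := by
  obtain ⟨a, ha⟩ := comp_X_add_one_eq_self_iff.mp hg
  obtain ⟨Q, rfl⟩ := map_modTwo_surjective a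
  obtain ⟨q, hq⟩ : 2 ∣ g - Q.comp (X * (-X + 1)) := by
    rw [← map_modTwo_eq_zero_iff, Polynomial.map_sub, map_comp, map_modTwo_X_mul_neg_X_add_one,
      ha, sub_self]
  exact ⟨Q, q, by rw [← hq, add_sub_cancel]⟩

section Automorphism

variable {β : (ZMod 4)[X] ≃ₐ[ZMod 4] (ZMod 4)[X]} {h : (ZMod 4)[X]}

lemma map_modTwo_algEquiv_apply (hβ : β X = -X + 1 + 2 * h) (p : (ZMod 4)[X]) :
    (β p).map modTwo = (p.map modTwo).comp (X + 1) := by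
  rw [algHom_apply_eq_comp β p, map_comp, hβ]
  simp only [Polynomial.map_add, Polynomial.map_neg, Polynomial.map_mul, Polynomial.map_one,
    Polynomial.map_ofNat, map_X, CharTwo.neg_eq, CharTwo.two_eq_zero, zero_mul, add_zero]

lemma algEquiv_apply_X_mul_neg_X_add_one (hβ : β X = -X + 1 + 2 * h) :
    β (X * (-X + 1)) = X * (-X + 1) + 2 * h := by
  rw [map_mul, map_add, map_neg, map_one, hβ]
  linear_combination (h * X - h - h ^ 2) * (CharP.ofNat_eq_zero (ZMod 4)[X] 4)

lemma algEquiv_apply_comp_X_mul_neg_X_add_one (hβ : β X = -X + 1 + 2 * h) (P : (ZMod 4)[X]) :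
    β (P.comp (X * (-X + 1))) =
      P.comp (X * (-X + 1)) + (derivative P).comp (X * (-X + 1)) * (2 * h) := by
  rw [algHom_apply_eq_comp β, comp_assoc, ← algHom_apply_eq_comp β,
    algEquiv_apply_X_mul_neg_X_add_one hβ, comp_eq_aeval, comp_eq_aeval, comp_eq_aeval,
    aeval_add_of_sq_eq_zero]
  linear_combination h ^ 2 * (CharP.ofNat_eq_zero (ZMod 4)[X] 4)

lemma map_modTwo_comp_X_add_one_ne (hβ : β X = -X + 1 + 2 * h) (hord : orderOf β = 4) :
    (h.map modTwo).comp (X + 1) ≠ h.map modTwo := by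
  intro hfix
  have hdvd : 2 ∣ β h - h := by
    rw [← map_modTwo_eq_zero_iff, Polynomial.map_sub, map_modTwo_algEquiv_apply hβ, hfix,
      sub_self]
  have hX : (β ^ 2) X = X := by
    rw [pow_two, AlgEquiv.mul_apply, hβ]
    simp only [map_add, map_neg, map_one, map_mul, map_ofNat, hβ]
    linear_combination two_mul_eq_zero_iff.mpr hdvd
  have hsq : β ^ 2 = 1 := AlgEquiv.coe_toAlgHom_injective (algHom_ext hX)
  have := orderOf_dvd_of_pow_eq_one hsq
  rw [hord] at this
  norm_num at this

lemma mem_adjoin_of_algEquiv_apply_eq_self (hβ : β X = -X + 1 + 2 * h) (hord : orderOf β = 4)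
    {g : (ZMod 4)[X]} (hg : β g = g) :
    g ∈ Algebra.adjoin (ZMod 4) {(X * (-X + 1)) ^ 2, 2 * (X * (-X + 1))} := by
  obtain ⟨Q, q, rfl⟩ := exists_eq_comp_add_two_mul (g := g)
    (by rw [← map_modTwo_algEquiv_apply hβ, hg])
  have hfix : 2 * ((derivative Q).comp (X * (-X + 1)) * h + (β q - q)) = 0 := by
    rw [map_add, map_mul, map_ofNat, algEquiv_apply_comp_X_mul_neg_X_add_one hβ] at hg
    linear_combination hg
  have hmod : (derivative (Q.map modTwo)).comp (orbitProd (ZMod 2)) * h.map modTwo +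
      ((q.map modTwo).comp (X + 1) - q.map modTwo) = 0 := by
    have := map_modTwo_eq_zero_iff.mpr (two_mul_eq_zero_iff.mp hfix)
    rwa [Polynomial.map_add, Polynomial.map_mul, Polynomial.map_sub, map_comp, ← derivative_map,
      map_modTwo_X_mul_neg_X_add_one, map_modTwo_algEquiv_apply hβ] at this
  have hD : derivative (Q.map modTwo) = 0 := comp_orbitProd_eq_zero_iff.mp <|
    eq_zero_of_mul_add_comp_X_add_one_sub_eq_zero
      (by rw [comp_assoc, orbitProd_comp_X_add_one]) (map_modTwo_comp_X_add_one_ne hβ hord) hmod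
  obtain ⟨A, r, rfl⟩ := exists_eq_comp_add_two_mul (g := q) <| by
    rw [hD, zero_comp, zero_mul, zero_add, sub_eq_zero] at hmod
    exact hmod
  have hQA : Q.comp (X * (-X + 1)) + 2 * (A.comp (X * (-X + 1)) + 2 * r) =
      aeval (X * (-X + 1)) (Q + 2 * A) := by
    rw [← comp_eq_aeval, add_comp, mul_comp, ofNat_comp]
    linear_combination r * (CharP.ofNat_eq_zero (ZMod 4)[X] 4)
  rw [hQA]
  refine aeval_mem_adjoin_sq_two_mul _ fun n hn => ?_
  rw [coeff_add, coeff_ofNat_mul]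
  exact dvd_add (two_dvd_coeff_of_derivative_map_modTwo_eq_zero hD hn) (dvd_mul_right 2 _)

lemma algEquiv_apply_eq_self_of_mem_adjoin (hβ : β X = -X + 1 + 2 * h) {g : (ZMod 4)[X]}
    (hg : g ∈ Algebra.adjoin (ZMod 4) {(X * (-X + 1)) ^ 2, 2 * (X * (-X + 1))}) : β g = g := by
  suffices Algebra.adjoin (ZMod 4) {(X * (-X + 1)) ^ 2, 2 * (X * (-X + 1))} ≤
      AlgHom.equalizer β.toAlgHom (AlgHom.id (ZMod 4) (ZMod 4)[X]) from this hg
  have h4 := CharP.ofNat_eq_zero (ZMod 4)[X] 4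
  rw [Algebra.adjoin_le_iff, Set.insert_subset_iff, Set.singleton_subset_iff]
  constructor
  · show β _ = _
    rw [AlgHom.id_apply, map_pow, algEquiv_apply_X_mul_neg_X_add_one hβ]
    linear_combination (X * (-X + 1) * h + h ^ 2) * h4
  · show β _ = _
    rw [AlgHom.id_apply, map_mul, map_ofNat, algEquiv_apply_X_mul_neg_X_add_one hβ]
    linear_combination h * h4

end Automorphism

/-- Theorem: over `R = ℤ/4ℤ`, if `f` is nilpotent, `β(x) = -x + 1 + f` and `β` has order 4,
then the ring of invariants of `⟨β⟩` is `R[y², 2y]` where `y = x·(-x+1)`. -/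
theorem zmod4_beta_f_order_four_invariants (f : (ZMod 4)[X]) (hf : IsNilpotent f)
    (β : (ZMod 4)[X] ≃ₐ[ZMod 4] (ZMod 4)[X]) (hβ : β X = -X + 1 + f)
    (hord : orderOf β = 4) :
    {g : (ZMod 4)[X] | ∀ σ ∈ Subgroup.zpowers β, σ g = g} =
      (Algebra.adjoin (ZMod 4)
        ({(X * (-X + 1)) ^ 2, 2 * (X * (-X + 1))} : Set ((ZMod 4)[X])) : Set ((ZMod 4)[X])) := by
  obtain ⟨h, rfl⟩ := two_dvd_of_isNilpotent hf
  ext g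
  simp only [Set.mem_ofPred_eq, SetLike.mem_coe, Subgroup.forall_mem_zpowers, ← AlgEquiv.smul_def,
    ← MulAction.mem_fixedBy, MulAction.mem_fixedBy_zpowers_iff_mem_fixedBy]
  exact ⟨mem_adjoin_of_algEquiv_apply_eq_self hβ hord, algEquiv_apply_eq_self_of_mem_adjoin hβ⟩
end

section
/- Let R = ℤ/4ℤ and let A be the subgroup of G(R) consisting of those automorphisms σ for which σ(x) - x is nilpotent. Let H be a subgroup of G(R) that is not contained in A and such that H ∩ A is the trivial group. Then there exists a nilpotent element f of R[x] with f ∈ R[y] (where y = x·(-x + 1)) such that H is the cyclic group of order 2 generated by the automorphism β_f defined by β_f(x) = -x + 1 + f, and the ring of invariants R[x]^H equals R[y + x·f]. -/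
/-!
Reduction modulo 2 sends each automorphism of `(ℤ/4ℤ)[x]` to `x ↦ x` or to `x ↦ 1 - x` over `𝔽₂`,
and `A` consists of those of the first kind, so `A` has index 2 and a subgroup meeting it trivially
is generated by one involution `β` with `β(x) ≡ 1 - x`. Then `x · β(x)` is `β`-invariant and
reduces to `x(1 - x)`, and over any ring the invariants of `x ↦ 1 - x` are the polynomials in
`x(1 - x)`. The nilpotent `f = β(x) - (1 - x)` is `β`-invariant, and a nilpotent `g` has
`g(u) = g(v)` whenever `u ≡ v` modulo 2, so `f` is also invariant under `x ↦ 1 - x`. Finally,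
a `β`-invariant `p` agrees modulo 2 with some `q ∈ R[x · β(x)]`; writing `p - q = 2r`, the
polynomial `r` is again invariant modulo 2, and lifting it once more finishes since `4 = 0`.
-/

open Polynomial

/-- The subgroup `A` of `G(ℤ/4ℤ)` consisting of the automorphisms `σ` of `(ℤ/4ℤ)[x]`
for which `σ(x) - x` is nilpotent. -/
noncomputable def nilShiftSubgroup : Subgroup ((ZMod 4)[X] ≃ₐ[ZMod 4] (ZMod 4)[X]) where
  carrier := {σ | IsNilpotent (σ X - X)}
  one_mem' := by
    simp only [Set.mem_setOf_eq, AlgEquiv.one_apply, sub_self]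
    exact IsNilpotent.zero
  mul_mem' := by
    intro σ τ hσ hτ
    have h : (σ * τ) X - X = (σ X - X) + σ (τ X - X) := by
      show σ (τ X) - X = _
      rw [map_sub]
      ring
    have : IsNilpotent (σ (τ X - X)) := hτ.map σ.toAlgHom
    rw [Set.mem_setOf_eq, h]
    exact (Commute.all _ _).isNilpotent_add hσ this
  inv_mem' := by
    intro σ hσ
    show IsNilpotent (σ.symm X - X)
    have h : σ.symm X - X = -(σ.symm (σ X - X)) := by
      rw [map_sub, σ.symm_apply_apply]
      ring
    rw [h]
    exact (hσ.map σ.symm.toAlgHom).neg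

/-- Divide by the monic invariant `X ^ 2 - X`: by uniqueness of division, quotient and remainder
are invariant too, and an invariant polynomial of degree at most one is constant. -/
theorem mem_adjoin_X_mul_one_sub_X_of_comp_eq_self {R : Type*} [CommRing R] {p : R[X]}
    (hp : p.comp (1 - X) = p) : p ∈ Algebra.adjoin R {X * (1 - X)} := by
  induction hn : p.natDegree using Nat.strong_induction_on generalizing p with
  | _ n ih =>
  set A := Algebra.adjoin R {(X : R[X]) * (1 - X)}
  rcases Nat.eq_zero_or_pos n with rfl | hpos
  · rw [eq_C_of_natDegree_eq_zero hn]
    exact Subalgebra.algebraMap_mem A _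
  have : Nontrivial R :=
    Nontrivial.of_polynomial_ne (ne_zero_of_natDegree_gt (p := p) (n := 0) (by omega))
  set t : R[X] := X ^ 2 - X
  have ht : t.Monic := by unfold t; monicity!
  have htdeg : t.natDegree = 2 := by unfold t; compute_degree!
  have htA : t ∈ A := by
    have : t = -(X * (1 - X)) := by ring
    rw [this]; exact neg_mem (Algebra.subset_adjoin rfl)
  have ht_inv : t.comp (1 - X) = t := by unfold t; simp only [sub_comp, pow_comp, X_comp]; ring
  have hq := eq_X_add_C_of_natDegree_le_one (p := p %ₘ t) (by
    have := natDegree_modByMonic_lt p ht (by rintro h; simp [h] at htdeg); omega)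
  set a := (p %ₘ t).coeff 1
  set c := (p %ₘ t).coeff 0
  have hq_comp : (p %ₘ t).comp (1 - X) = C (-a) * X + C (a + c) := by
    rw [hq]
    simp only [add_comp, mul_comp, C_comp, X_comp, map_neg, map_add]; ring
  have hdecomp : (p %ₘ t).comp (1 - X) + t * (p /ₘ t).comp (1 - X) = p := by
    conv_rhs => rw [← hp, ← modByMonic_add_div p t]
    rw [add_comp, mul_comp, ht_inv]
  obtain ⟨hu, hq'⟩ := div_modByMonic_unique _ _ ht ⟨hdecomp, by
    rw [hq_comp, degree_eq_natDegree ht.ne_zero, htdeg]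
    exact (degree_linear_le).trans_lt (by norm_num)⟩
  have ha : a = 0 := by
    have h0 := congrArg (coeff · 0) hq'
    simp only [hq_comp, coeff_add, coeff_C_mul_X, coeff_C_zero, zero_ne_one, if_false] at h0
    linear_combination -h0
  rw [← modByMonic_add_div p t, hq, ha]
  refine add_mem (by simpa using Subalgebra.algebraMap_mem A c) (mul_mem htA (ih _ ?_ hu.symm rfl))
  rw [natDegree_divByMonic p ht, htdeg]; omega

theorem mem_adjoin_singleton_iff_exists_comp {R : Type*} [CommSemiring R] {w p : R[X]} :
    p ∈ Algebra.adjoin R {w} ↔ ∃ P : R[X], P.comp w = p := by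
  simp [Algebra.adjoin_singleton_eq_range_aeval, comp_eq_aeval]

theorem comp_eq_self_of_mem_adjoin {R : Type*} [CommSemiring R] {w b p : R[X]}
    (hw : w.comp b = w) (hp : p ∈ Algebra.adjoin R {w}) : p.comp b = p := by
  obtain ⟨P, rfl⟩ := mem_adjoin_singleton_iff_exists_comp.mp hp
  rw [comp_assoc, hw]

theorem exists_mem_adjoin_map_eq {R S : Type*} [CommRing R] [CommRing S] {φ : R →+* S}
    (hφ : Function.Surjective φ) {w p : R[X]} (hp : p.map φ ∈ Algebra.adjoin S {w.map φ}) :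
    ∃ q ∈ Algebra.adjoin R {w}, q.map φ = p.map φ := by
  obtain ⟨P, hP⟩ := mem_adjoin_singleton_iff_exists_comp.mp hp
  obtain ⟨Q, rfl⟩ := map_surjective φ hφ P
  exact ⟨Q.comp w, mem_adjoin_singleton_iff_exists_comp.mpr ⟨Q, rfl⟩, by rw [map_comp, hP]⟩

theorem algEquiv_apply_eq_comp {R : Type*} [CommSemiring R] (σ : R[X] ≃ₐ[R] R[X]) (p : R[X]) :
    σ p = p.comp (σ X) := by
  rw [comp_eq_aeval, aeval_algHom_apply, aeval_X_left_apply]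

theorem forall_mem_zpowers_smul_eq_iff {G α : Type*} [Group G] [MulAction G α] {β : G} {a : α} :
    (∀ σ ∈ Subgroup.zpowers β, σ • a = a) ↔ β • a = a := by
  simpa only [SetLike.le_def, MulAction.mem_stabilizer_iff] using
    Subgroup.zpowers_le (H := MulAction.stabilizer G a)

theorem Subgroup.eq_zpowers_and_orderOf_eq_two {G : Type*} [Group G] {H K : Subgroup G}
    (hK : ∀ σ τ, σ ∉ K → τ ∉ K → σ * τ ∈ K) (hHK : H ⊓ K = ⊥) {β : G} (hβH : β ∈ H)
    (hβK : β ∉ K) : H = zpowers β ∧ orderOf β = 2 := by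
  have eq_one : ∀ σ ∈ H, σ ∈ K → σ = 1 := fun σ hσH hσK => by
    have hσ : σ ∈ H ⊓ K := ⟨hσH, hσK⟩
    rwa [hHK, Subgroup.mem_bot] at hσ
  refine ⟨le_antisymm (fun τ hτ => ?_) (zpowers_le.mpr hβH), orderOf_eq_prime ?_ ?_⟩
  · by_cases hτK : τ ∈ K
    · rw [eq_one τ hτ hτK]
      exact one_mem _
    · rw [eq_inv_of_mul_eq_one_right (eq_one _ (mul_mem hβH hτ) (hK _ _ hβK hτK))]
      exact inv_mem (mem_zpowers β)
  · rw [sq]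
    exact eq_one _ (mul_mem hβH hβH) (hK _ _ hβK hβK)
  · rintro rfl
    exact hβK (one_mem K)

theorem two_mul_eq_two_mul_iff {p q : (ZMod 4)[X]} :
    2 * p = 2 * q ↔ p.map modTwo = q.map modTwo := by
  simp only [Polynomial.ext_iff, coeff_ofNat_mul, coeff_map]
  exact forall_congr' fun _ =>
    (by decide : ∀ a b : ZMod 4, 2 * a = 2 * b ↔ modTwo a = modTwo b) _ _

theorem isNilpotent_iff_map_modTwo_eq_zero {p : (ZMod 4)[X]} :
    IsNilpotent p ↔ p.map modTwo = 0 := by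
  refine ⟨fun hp => (hp.map (mapRingHom modTwo)).eq_zero, fun hp => ?_⟩
  rw [Polynomial.isNilpotent_iff]
  intro n
  exact ⟨2, (by decide : ∀ a : ZMod 4, modTwo a = 0 → a ^ 2 = 0) _
    (by simpa using congrArg (coeff · n) hp)⟩

theorem exists_eq_two_mul_of_isNilpotent {p : (ZMod 4)[X]} (hp : IsNilpotent p) :
    ∃ r, p = 2 * r := by
  have hp' : p ∈ (Ideal.span {(2 : ZMod 4)}).map C := by
    refine Ideal.mem_map_C_iff.mpr fun n => Ideal.mem_span_singleton.mpr ?_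
    refine (by decide : ∀ a : ZMod 4, modTwo a = 0 → 2 ∣ a) _ ?_
    simpa using congrArg (coeff · n) (isNilpotent_iff_map_modTwo_eq_zero.mp hp)
  rw [Ideal.map_span, Set.image_singleton, Ideal.mem_span_singleton, map_ofNat] at hp'
  exact hp'

theorem two_mul_comp (p u : (ZMod 4)[X]) : (2 * p).comp u = 2 * p.comp u := by
  simp only [mul_comp, ofNat_comp, Nat.cast_ofNat]

theorem comp_eq_comp_of_isNilpotent {p u v : (ZMod 4)[X]} (hp : IsNilpotent p)
    (huv : u.map modTwo = v.map modTwo) : p.comp u = p.comp v := by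
  obtain ⟨r, rfl⟩ := exists_eq_two_mul_of_isNilpotent hp
  rw [two_mul_comp, two_mul_comp, two_mul_eq_two_mul_iff, map_comp, map_comp, huv]

theorem comp_eq_self_iff_mem_adjoin_X_mul {b : (ZMod 4)[X]} (hb : b.map modTwo = 1 - X)
    (hbb : b.comp b = X) {p : (ZMod 4)[X]} :
    p.comp b = p ↔ p ∈ Algebra.adjoin (ZMod 4) {X * b} := by
  set A := Algebra.adjoin (ZMod 4) {X * b}
  have hw : (X * b).comp b = X * b := by rw [mul_comp, X_comp, hbb, mul_comm]
  refine ⟨fun hp => ?_, comp_eq_self_of_mem_adjoin hw⟩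
  have lift : ∀ r : (ZMod 4)[X], (r.comp b).map modTwo = r.map modTwo →
      ∃ q ∈ A, q.map modTwo = r.map modTwo := fun r hr =>
    exists_mem_adjoin_map_eq (ZMod.ringHom_surjective modTwo) <| by
      rw [Polynomial.map_mul, map_X, hb]
      exact mem_adjoin_X_mul_one_sub_X_of_comp_eq_self (by rw [← hb, ← map_comp, hr])
  obtain ⟨q, hqA, hq⟩ := lift p (by rw [hp])
  obtain ⟨r, hr⟩ := exists_eq_two_mul_of_isNilpotent (p := p - q)
    (isNilpotent_iff_map_modTwo_eq_zero.mpr (by rw [Polynomial.map_sub, hq, sub_self]))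
  have hr_comp : 2 * r.comp b = 2 * r := by
    rw [← two_mul_comp, ← hr, sub_comp, hp, comp_eq_self_of_mem_adjoin hw hqA]
  obtain ⟨s, hsA, hs⟩ := lift r (two_mul_eq_two_mul_iff.mp hr_comp)
  have hps : p = q + 2 * s := by
    rw [two_mul_eq_two_mul_iff.mpr hs, ← hr]
    ring
  rw [hps, two_mul]
  exact add_mem hqA (add_mem hsA hsA)

theorem map_modTwo_apply_X (σ : (ZMod 4)[X] ≃ₐ[ZMod 4] (ZMod 4)[X]) :
    (σ X).map modTwo = X ∨ (σ X).map modTwo = 1 - X := by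
  set b := (σ X).map modTwo
  have hcomp : ((σ.symm X).map modTwo).comp b = X := by
    rw [← map_comp, ← algEquiv_apply_eq_comp, σ.apply_symm_apply, map_X]
  have hdeg : b.natDegree = 1 :=
    Nat.eq_one_of_mul_eq_one_left (by rw [← natDegree_comp, hcomp, natDegree_X])
  have hlead : b.coeff 1 = 1 := by
    have : b.leadingCoeff ≠ 0 := leadingCoeff_ne_zero.mpr (by rintro h; simp [h] at hdeg)
    rw [leadingCoeff, hdeg] at this
    exact (by decide : ∀ a : ZMod 2, a ≠ 0 → a = 1) _ this
  rw [eq_X_add_C_of_natDegree_le_one hdeg.le, hlead]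
  rcases (by decide : ∀ c : ZMod 2, c = 0 ∨ c = 1) (b.coeff 0) with h | h <;> rw [h]
  · left; simp
  · right; rw [map_one, one_mul, CharTwo.sub_eq_add, add_comm]

theorem mem_nilShiftSubgroup_iff {σ : (ZMod 4)[X] ≃ₐ[ZMod 4] (ZMod 4)[X]} :
    σ ∈ nilShiftSubgroup ↔ (σ X).map modTwo = X := by
  change IsNilpotent _ ↔ _
  rw [isNilpotent_iff_map_modTwo_eq_zero, Polynomial.map_sub, map_X, sub_eq_zero]

theorem map_modTwo_apply_X_of_not_mem {σ : (ZMod 4)[X] ≃ₐ[ZMod 4] (ZMod 4)[X]}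
    (hσ : σ ∉ nilShiftSubgroup) : (σ X).map modTwo = 1 - X :=
  (map_modTwo_apply_X σ).resolve_left (mt mem_nilShiftSubgroup_iff.mpr hσ)

theorem mul_mem_nilShiftSubgroup {σ τ : (ZMod 4)[X] ≃ₐ[ZMod 4] (ZMod 4)[X]}
    (hσ : σ ∉ nilShiftSubgroup) (hτ : τ ∉ nilShiftSubgroup) : σ * τ ∈ nilShiftSubgroup := by
  rw [mem_nilShiftSubgroup_iff, AlgEquiv.mul_apply, algEquiv_apply_eq_comp σ, map_comp,
    map_modTwo_apply_X_of_not_mem hσ, map_modTwo_apply_X_of_not_mem hτ]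
  simp only [sub_comp, one_comp, X_comp]
  ring

/-- Theorem: over `R = ℤ/4ℤ`, if a subgroup `H` of `G(R)` is not contained in `A` and
`H ∩ A` is trivial, then `H = ⟨β_f⟩` is cyclic of order 2 with `β_f(x) = -x + 1 + f` for
some nilpotent `f ∈ R[y]`, and `R[x]^H = R[y + x·f]`, where `y = x·(-x+1)`. -/
theorem zmod4_invariants_of_complement_subgroup
    (H : Subgroup ((ZMod 4)[X] ≃ₐ[ZMod 4] (ZMod 4)[X]))
    (h1 : ¬ H ≤ nilShiftSubgroup) (h2 : H ⊓ nilShiftSubgroup = ⊥) :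
    ∃ f : (ZMod 4)[X], IsNilpotent f ∧
      f ∈ Algebra.adjoin (ZMod 4) ({X * (-X + 1)} : Set ((ZMod 4)[X])) ∧
      ∃ β : (ZMod 4)[X] ≃ₐ[ZMod 4] (ZMod 4)[X], β X = -X + 1 + f ∧
        H = Subgroup.zpowers β ∧ orderOf β = 2 ∧
        {g : (ZMod 4)[X] | ∀ σ ∈ H, σ g = g} =
          (Algebra.adjoin (ZMod 4)
            ({X * (-X + 1) + X * f} : Set ((ZMod 4)[X])) : Set ((ZMod 4)[X])) := by
  obtain ⟨β, hβH, hβA⟩ := SetLike.not_le_iff_exists.mp h1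
  obtain ⟨rfl, hβ2⟩ := Subgroup.eq_zpowers_and_orderOf_eq_two
    (fun _ _ => mul_mem_nilShiftSubgroup) h2 hβH hβA
  set b := β X
  have hb : b.map modTwo = 1 - X := map_modTwo_apply_X_of_not_mem hβA
  have hbb : b.comp b = X := by
    rw [← algEquiv_apply_eq_comp, ← AlgEquiv.mul_apply, ← sq, ← hβ2, pow_orderOf_eq_one,
      AlgEquiv.one_apply]
  set f := b - (1 - X)
  have hf : IsNilpotent f := isNilpotent_iff_map_modTwo_eq_zero.mpr (by simp [f, hb])
  have hf_comp : f.comp (1 - X) = f :=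
    calc f.comp (1 - X) = f.comp b := comp_eq_comp_of_isNilpotent hf (by simp [hb])
      _ = f := by simp only [f, sub_comp, one_comp, X_comp, hbb]; ring
  refine ⟨f, hf, ?_, β, by ring, rfl, hβ2, ?_⟩
  · rw [neg_add_eq_sub]
    exact mem_adjoin_X_mul_one_sub_X_of_comp_eq_self hf_comp
  ext p
  rw [show X * (-X + 1) + X * f = X * b by ring, SetLike.mem_coe,
    ← comp_eq_self_iff_mem_adjoin_X_mul hb hbb, ← algEquiv_apply_eq_comp, Set.mem_ofPred_eq]
  simp only [← AlgEquiv.smul_def]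
  exact forall_mem_zpowers_smul_eq_iff
end

section
/- Let R = ℤ/4ℤ, let y = x·(-x + 1), and let f be a nilpotent element of R[x] with f ∈ R[y]. Then the set of automorphisms of R[x] that fix every element of the subalgebra R[y + x·f] is exactly the two-element group {identity, β_f}, where β_f is the automorphism defined by β_f(x) = -x + 1 + f. -/
open Polynomial

namespace Zmod4Aux

noncomputable def psi : (ZMod 4)[X] →+* (ZMod 2)[X] :=
  mapRingHom (ZMod.castHom (by norm_num : (2:ℕ) ∣ 4) (ZMod 2))

lemma coeff_two_mul (p : (ZMod 4)[X]) (n : ℕ) : (2 * p).coeff n = 2 * p.coeff n := by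
  rw [show (2 : (ZMod 4)[X]) = C 2 from (map_ofNat C 2).symm, coeff_C_mul]

lemma zmod_scalar : ∀ c : ZMod 4,
    (ZMod.castHom (by norm_num : (2:ℕ) ∣ 4) (ZMod 2)) c = 0 ↔ 2 * c = 0 := by decide

lemma zmod_scalar_mul : ∀ a b : ZMod 4, 2 * a = 0 → 2 * b = 0 → a * b = 0 := by decide

lemma psi_eq_zero_iff (p : (ZMod 4)[X]) : psi p = 0 ↔ 2 * p = 0 := by
  rw [Polynomial.ext_iff, Polynomial.ext_iff]
  refine forall_congr' fun n => ?_
  simp only [psi, coe_mapRingHom, coeff_map, coeff_zero, coeff_two_mul]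
  exact zmod_scalar _

lemma mul_eq_zero_of_two (p q : (ZMod 4)[X]) (hp : 2 * p = 0) (hq : 2 * q = 0) :
    p * q = 0 := by
  ext n
  rw [coeff_mul, coeff_zero]
  refine Finset.sum_eq_zero fun x _ => ?_
  have h1 : 2 * p.coeff x.1 = 0 := by
    have := congrArg (fun r => Polynomial.coeff r x.1) hp; simpa [coeff_two_mul] using this
  have h2 : 2 * q.coeff x.2 = 0 := by
    have := congrArg (fun r => Polynomial.coeff r x.2) hq; simpa [coeff_two_mul] using this
  exact zmod_scalar_mul _ _ h1 h2

lemma Cc_pow (c : ZMod 4) (B e : (ZMod 4)[X]) (hce : C c * e = 0) :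
    ∀ n : ℕ, C c * (B + e) ^ n = C c * B ^ n
  | 0 => by simp
  | n + 1 => by
    have ih := Cc_pow c B e hce n
    rw [pow_succ, pow_succ]
    linear_combination (B + e) * ih + B ^ n * hce

lemma comp_add_right (F B e : (ZMod 4)[X]) (hF : 2 * F = 0) (he : 2 * e = 0) :
    F.comp (B + e) = F.comp B := by
  rw [comp_eq_sum_left, comp_eq_sum_left]
  refine Finset.sum_congr rfl fun n hn => ?_
  have hc : 2 * F.coeff n = 0 := by
    have := congrArg (fun r => Polynomial.coeff r n) hF; simpa [coeff_two_mul] using this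
  have hCc : 2 * (C (F.coeff n)) = 0 := by
    rw [show (2 : (ZMod 4)[X]) = C 2 from (map_ofNat C 2).symm, ← C_mul, hc, C_0]
  exact Cc_pow _ _ _ (mul_eq_zero_of_two _ _ hCc he) n

lemma algEquiv_apply (τ : (ZMod 4)[X] ≃ₐ[ZMod 4] (ZMod 4)[X]) (p : (ZMod 4)[X]) :
    τ p = p.comp (τ X) := by
  rw [comp_eq_aeval]
  conv_lhs => rw [← aeval_X_left_apply p]
  exact (aeval_algHom_apply (τ : (ZMod 4)[X] →ₐ[ZMod 4] (ZMod 4)[X]) X p).symm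

lemma algEquiv_ext {τ₁ τ₂ : (ZMod 4)[X] ≃ₐ[ZMod 4] (ZMod 4)[X]} (h : τ₁ X = τ₂ X) :
    τ₁ = τ₂ := by
  refine AlgEquiv.ext fun p => ?_
  rw [algEquiv_apply τ₁, algEquiv_apply τ₂, h]

lemma psi_comp (p q : (ZMod 4)[X]) : psi (p.comp q) = (psi p).comp (psi q) := by
  simp [psi, map_comp]

lemma psi_X : psi X = X := by simp [psi]

lemma char4 : (4 : (ZMod 4)[X]) = 0 := by
  rw [show (4 : (ZMod 4)[X]) = C 4 from (map_ofNat C 4).symm,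
    show (4 : ZMod 4) = 0 from rfl, C_0]

lemma char2 : (2 : (ZMod 2)[X]) = 0 := by
  rw [show (2 : (ZMod 2)[X]) = C 2 from (map_ofNat C 2).symm,
    show (2 : ZMod 2) = 0 from rfl, C_0]

end Zmod4Aux

/-- Theorem: over `R = ℤ/4ℤ`, for nilpotent `f ∈ R[y]` (where `y = x·(-x+1)`) and
`β_f(x) = -x + 1 + f`, the set of automorphisms of `R[x]` fixing every element of
`R[y + x·f]` is exactly the two-element group `{1, β_f}`. -/
theorem zmod4_stabilizer_of_adjoin_y_add_xf (f : (ZMod 4)[X]) (hf : IsNilpotent f)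
    (hfy : f ∈ Algebra.adjoin (ZMod 4) ({X * (-X + 1)} : Set ((ZMod 4)[X])))
    (β : (ZMod 4)[X] ≃ₐ[ZMod 4] (ZMod 4)[X]) (hβ : β X = -X + 1 + f) :
    {σ : (ZMod 4)[X] ≃ₐ[ZMod 4] (ZMod 4)[X] |
        ∀ g ∈ Algebra.adjoin (ZMod 4) ({X * (-X + 1) + X * f} : Set ((ZMod 4)[X])),
          σ g = g} = {1, β} ∧ β ≠ 1 := by
  have hf2 : (2 : (ZMod 4)[X]) * f = 0 := by
    rw [← Zmod4Aux.psi_eq_zero_iff]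
    exact (hf.map Zmod4Aux.psi).eq_zero
  have hff : f * f = 0 := Zmod4Aux.mul_eq_zero_of_two _ _ hf2 hf2
  have hpsif : Zmod4Aux.psi f = 0 := (Zmod4Aux.psi_eq_zero_iff f).2 hf2
  obtain ⟨F, hF⟩ : ∃ F : (ZMod 4)[X], F.comp (X * (-X + 1)) = f := by
    rw [Algebra.adjoin_singleton_eq_range_aeval] at hfy
    obtain ⟨F, hF⟩ := hfy
    exact ⟨F, by rw [comp_eq_aeval]; exact hF⟩
  -- 2 * F = 0
  have hpsiy : Zmod4Aux.psi (X * (-X + 1)) = X * (-X + 1) := by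
    rw [map_mul, map_add, map_neg, map_one, Zmod4Aux.psi_X]
  have h2F : (2 : (ZMod 4)[X]) * F = 0 := by
    rw [← Zmod4Aux.psi_eq_zero_iff]
    have h0 : (Zmod4Aux.psi F).comp ((X : (ZMod 2)[X]) * (-X + 1)) = 0 := by
      rw [← hpsiy, ← Zmod4Aux.psi_comp, hF, hpsif]
    rcases comp_eq_zero_iff.mp h0 with h | ⟨-, h⟩
    · exact h
    · exfalso
      have := congrArg (fun p => p.coeff 1) h
      simp only [coeff_C] at this
      have h1 : ((X : (ZMod 2)[X]) * (-X + 1)).coeff 1 = 1 := by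
        have : (X : (ZMod 2)[X]) * (-X + 1) = -X ^ 2 + X := by ring
        rw [this]
        simp
      rw [h1] at this
      simp at this
  have hpsiF : Zmod4Aux.psi F = 0 := (Zmod4Aux.psi_eq_zero_iff F).2 h2F
  -- β fixes the subalgebra
  have hby : β X * (-(β X) + 1) = X * (-X + 1) + (-f) := by
    rw [hβ]; linear_combination X * hf2 - hff
  have hbf : β f = f := by
    rw [Zmod4Aux.algEquiv_apply, ← hF, comp_assoc]
    have : (X * (-X + 1)).comp (β X) = X * (-X + 1) + (-f) := by
      simp only [mul_comp, add_comp, neg_comp, one_comp, X_comp]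
      exact hby
    rw [this, Zmod4Aux.comp_add_right F _ (-f) h2F (by linear_combination -hf2), hF]
  have hβG : β (X * (-X + 1) + X * f) = X * (-X + 1) + X * f := by
    rw [map_add, map_mul, map_mul, map_add, map_neg, map_one, hbf]
    calc β X * (-(β X) + 1) + β X * f
        = (X * (-X + 1) + (-f)) + β X * f := by rw [hby]
      _ = X * (-X + 1) + X * f := by rw [hβ]; linear_combination hff - X * hf2
  refine ⟨?_, ?_⟩
  · ext σ
    simp only [Set.mem_setOf_eq, Set.mem_insert_iff, Set.mem_singleton_iff]
    constructor
    · intro hσ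
      have hGfix : σ (X * (-X + 1) + X * f) = X * (-X + 1) + X * f :=
        hσ _ (Algebra.self_mem_adjoin_singleton _ _)
      set s : (ZMod 4)[X] := σ X with hs
      have hcomp : σ (X * (-X + 1) + X * f)
          = s * (-s + 1) + s * (F.comp (s * (-s + 1))) := by
        rw [Zmod4Aux.algEquiv_apply, ← hs]
        conv_lhs => rw [← hF]
        simp only [add_comp, mul_comp, X_comp, neg_comp, one_comp, comp_assoc]
      rw [hcomp] at hGfix
      -- mod 2 analysis
      have hFc0 : ∀ p : (ZMod 4)[X], Zmod4Aux.psi (F.comp p) = 0 := fun p => by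
        rw [Zmod4Aux.psi_comp, hpsiF, zero_comp]
      have h1 : (Zmod4Aux.psi s) * (-(Zmod4Aux.psi s) + 1) = X * (-X + 1) := by
        have h := congrArg Zmod4Aux.psi hGfix
        simp only [map_add, map_mul, map_neg, map_one, hFc0, hpsif, Zmod4Aux.psi_X,
          mul_zero, add_zero] at h
        exact h
      have hmod : (Zmod4Aux.psi s - X) * (Zmod4Aux.psi s - X - 1) = 0 := by
        linear_combination (-1 : (ZMod 2)[X]) * h1
          + (X ^ 2 - (Zmod4Aux.psi s) * X) * Zmod4Aux.char2
      rcases mul_eq_zero.mp hmod with h | h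
      · -- σ = 1
        left
        have he : (2 : (ZMod 4)[X]) * (s - X) = 0 := by
          rw [← Zmod4Aux.psi_eq_zero_iff, map_sub, Zmod4Aux.psi_X]
          exact h
        have hee : (s - X) * (s - X) = 0 := Zmod4Aux.mul_eq_zero_of_two _ _ he he
        have hef : (s - X) * f = 0 := Zmod4Aux.mul_eq_zero_of_two _ _ he hf2
        have hws : s * (-s + 1) = X * (-X + 1) + (s - X) := by
          linear_combination (-X) * he - hee
        rw [hws, Zmod4Aux.comp_add_right F _ (s - X) h2F he, hF] at hGfix
        have he0 : s - X = 0 := by linear_combination hGfix - hef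
        exact Zmod4Aux.algEquiv_ext (by
          rw [AlgEquiv.one_apply, ← hs]
          exact sub_eq_zero.mp he0)
      · -- σ = β
        right
        have he : (2 : (ZMod 4)[X]) * (s - X - 1) = 0 := by
          rw [← Zmod4Aux.psi_eq_zero_iff, map_sub, map_sub, map_one, Zmod4Aux.psi_X]
          exact h
        have hee : (s - X - 1) * (s - X - 1) = 0 := Zmod4Aux.mul_eq_zero_of_two _ _ he he
        have hef : (s - X - 1) * f = 0 := Zmod4Aux.mul_eq_zero_of_two _ _ he hf2
        have hd : (2 : (ZMod 4)[X]) * (-(2 * X) - (s - X - 1)) = 0 := by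
          linear_combination -he - X * Zmod4Aux.char4
        have hws : s * (-s + 1) = X * (-X + 1) + (-(2 * X) - (s - X - 1)) := by
          linear_combination (-X) * he - hee
        rw [hws, Zmod4Aux.comp_add_right F _ _ h2F hd, hF] at hGfix
        have he2 : s - X - 1 = f - 2 * X := by linear_combination -hGfix + hef
        exact Zmod4Aux.algEquiv_ext (by
          rw [← hs, hβ]
          linear_combination he2 + Zmod4Aux.char4 * 0)
    · intro hσ
      rcases hσ with rfl | rfl
      · intro g _; rfl
      · intro g hg
        rw [Algebra.adjoin_singleton_eq_range_aeval] at hg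
        obtain ⟨p, rfl⟩ := hg
        show σ (aeval (X * (-X + 1) + X * f) p) = aeval (X * (-X + 1) + X * f) p
        rw [← aeval_algHom_apply σ, hβG]
  · intro h1
    have hX : β X = X := by rw [h1]; rfl
    have hfeq : f = 2 * X - 1 := by
      rw [hβ] at hX
      linear_combination hX
    rw [hfeq] at hf2
    have h20 : (2 : (ZMod 4)[X]) = 0 := by
      linear_combination -hf2 + X * Zmod4Aux.char4
    have := congrArg (fun p => p.coeff 0) h20
    have h2c : (2 : ZMod 4) = 0 := by
      have := congrArg (fun p => p.coeff 0) h20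
      simpa using this
    exact absurd h2c (by decide)
end

section
/- Let n > 1 be an integer, let u be an integer with gcd(u, n) = 1, and let a, b be integers with gcd(a, n) = gcd(b, n). Then the elements α and β of B(ℤ_n) defined by α(x) = u·x + a and β(x) = u·x + b are conjugate in the group B(ℤ_n). -/
/-!
Conjugating `x ↦ u·x + a` by the scaling `x ↦ v·x` with `v` a unit gives `x ↦ u·x + v·a`, so it
suffices that `a` and `b` are associated in `ℤ_n`. Both generate the same ideal as `gcd(a, n)`,
and elements of `ℤ_n` that divide each other are associated, because every element of `ℤ_n` is
a unit times a divisor of `n`.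
-/

open Polynomial

namespace ZMod

theorem dvd_of_natCast_dvd_natCast {n d e : ℕ} (hd : d ∣ n) (h : (d : ZMod n) ∣ (e : ZMod n)) :
    d ∣ e := by
  have := map_dvd (castHom hd (ZMod d)) h
  rwa [map_natCast, map_natCast, natCast_self, zero_dvd_iff, natCast_eq_zero_iff] at this

theorem associated_of_dvd_of_dvd {n : ℕ} {x y : ZMod n} (hxy : x ∣ y) (hyx : y ∣ x) :
    Associated x y := by
  obtain ⟨d, hd, u, hu, rfl⟩ := eq_unit_mul_divisor x
  obtain ⟨e, he, w, hw, rfl⟩ := eq_unit_mul_divisor y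
  rw [hu.mul_left_dvd, hw.dvd_mul_left] at hxy
  rw [hw.mul_left_dvd, hu.dvd_mul_left] at hyx
  obtain rfl : d = e := Nat.dvd_antisymm (dvd_of_natCast_dvd_natCast hd hxy)
    (dvd_of_natCast_dvd_natCast he hyx)
  rw [associated_isUnit_mul_left_iff hu, associated_isUnit_mul_right_iff hw]
  exact Associated.refl _

theorem associated_intCast_gcd (a : ℤ) (n : ℕ) :
    Associated (a : ZMod n) (Int.gcd a n : ZMod n) := by
  refine associated_of_dvd_of_dvd ⟨Int.gcdA a n, ?_⟩ ?_
  · rw [← Int.cast_natCast, Int.gcd_eq_gcd_ab]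
    simp
  · simpa using Int.cast_dvd_cast _ _ (Int.gcd_dvd_left a n)

theorem associated_intCast_of_gcd_eq {n : ℕ} {a b : ℤ} (hab : Int.gcd a n = Int.gcd b n) :
    Associated (a : ZMod n) (b : ZMod n) :=
  (associated_intCast_gcd a n).trans (hab ▸ (associated_intCast_gcd b n).symm)

end ZMod

namespace Polynomial

variable {R : Type*} [CommRing R]

theorem algEquiv_ext {σ τ : R[X] ≃ₐ[R] R[X]} (h : σ X = τ X) : σ = τ :=
  AlgEquiv.coe_toAlgHom_injective (algHom_ext h)

theorem algEquivCMulXAddC_mem_Bx (v : Rˣ) (c : R) : algEquivCMulXAddC (v : R) c ∈ Bx R :=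
  ⟨v, c, by simp⟩

theorem conj_algEquivCMulXAddC_apply_X {σ : R[X] ≃ₐ[R] R[X]} {u a : R}
    (hσ : σ X = C u * X + C a) (v c : R) [Invertible v] :
    ((algEquivCMulXAddC v c)⁻¹ * σ * algEquivCMulXAddC v c) X =
      C u * X + C (v * a + (1 - u) * c) := by
  have hC (r : R) : σ (C r) = C r := σ.commutes r
  simp only [AlgEquiv.aut_inv, AlgEquiv.mul_apply, algEquivCMulXAddC_apply, aeval_X, map_add,
    map_mul, hσ, hC, algEquivCMulXAddC_symm_apply, aeval_C, algebraMap_eq, map_sub, map_one]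
  have hv : C v * C ⅟v = (1 : R[X]) := by rw [← C_mul, mul_invOf_self, C_1]
  linear_combination (C u * (X - C c)) * hv

end Polynomial

theorem zmodn_conjugate_of_gcd_eq_general (n : ℕ) (u a b : ℤ)
    (hab : Int.gcd a n = Int.gcd b n)
    (α β : (ZMod n)[X] ≃ₐ[ZMod n] (ZMod n)[X])
    (hα : α X = C ((u : ZMod n)) * X + C ((a : ZMod n)))
    (hβ : β X = C ((u : ZMod n)) * X + C ((b : ZMod n))) :
    ∃ g ∈ Bx (ZMod n), β = g⁻¹ * α * g := by
  obtain ⟨v, hv⟩ := ZMod.associated_intCast_of_gcd_eq hab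
  refine ⟨algEquivCMulXAddC (v : ZMod n) 0, algEquivCMulXAddC_mem_Bx v 0, algEquiv_ext ?_⟩
  rw [hβ, conj_algEquivCMulXAddC_apply_X hα, ← hv, mul_zero, add_zero, mul_comm (v : ZMod n)]

/-- Theorem: in `B(ℤ_n)`, `α(x) = u·x + a` and `β(x) = u·x + b` are conjugate
whenever `gcd(a,n) = gcd(b,n)`. -/
theorem zmodn_conjugate_of_gcd_eq (n : ℕ) (hn : 1 < n) (u a b : ℤ)
    (hu : Int.gcd u n = 1) (hab : Int.gcd a n = Int.gcd b n)
    (α β : (ZMod n)[X] ≃ₐ[ZMod n] (ZMod n)[X])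
    (hα : α X = C ((u : ZMod n)) * X + C ((a : ZMod n)))
    (hβ : β X = C ((u : ZMod n)) * X + C ((b : ZMod n))) :
    ∃ g ∈ Bx (ZMod n), β = g⁻¹ * α * g :=
  zmodn_conjugate_of_gcd_eq_general n u a b hab α β hα hβ
end

section
/- Let n > 1 be an integer, let u be an integer with gcd(u, n) = 1, and let a, b be positive integers each dividing n. Then the elements α and β of B(ℤ_n) defined by α(x) = u·x + a and β(x) = u·x + b are conjugate in the group B(ℤ_n) if and only if gcd(u - 1, a) = gcd(u - 1, b). -/
open Polynomial

/-!
If `g x = v x + c`, then `g β = α g` amounts to `u c + b = v a + c`, so `α` and `β` are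
conjugate iff `b = v a + c (u - 1)` in `ℤ_n` for a unit `v`. As `d = gcd(u - 1, a)` divides `n`,
reducing such a relation mod `d` shows `d ∣ b`, and symmetrically. Conversely,
`d = x a + y (u - 1)` by Bezout, with `x` coprime to `k = gcd((u - 1)/d, n/a)`; shifting `x` by
multiples of `k` preserves the relation modulo `n` after adjusting `y`, and some shift of `x` is a
unit mod `n`. Hence `a` and `b` are both related to `d` in this way.
-/

section AffineAutomorphisms

variable {R : Type*} [CommRing R]

theorem algEquiv_eq_iff_apply_X {σ τ : R[X] ≃ₐ[R] R[X]} : σ = τ ↔ σ X = τ X :=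
  ⟨fun h ↦ h ▸ rfl, fun h ↦ AlgEquiv.coe_toAlgHom_injective (algHom_ext h)⟩

theorem mul_apply_X_of_apply_X {σ τ : R[X] ≃ₐ[R] R[X]} {s c t d : R}
    (hσ : σ X = C s * X + C c) (hτ : τ X = C t * X + C d) :
    (σ * τ) X = C (t * s) * X + C (t * c + d) := by
  rw [AlgEquiv.mul_apply, hτ, map_add, map_mul, ← algebraMap_eq, AlgEquiv.commutes,
    AlgEquiv.commutes, hσ, algebraMap_eq, C_mul, C_add, C_mul]
  ring

theorem mul_eq_mul_iff_of_apply_X {g α β : R[X] ≃ₐ[R] R[X]} {v c u a b : R}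
    (hg : g X = C v * X + C c) (hα : α X = C u * X + C a) (hβ : β X = C u * X + C b) :
    g * β = α * g ↔ u * c + b = v * a + c := by
  rw [algEquiv_eq_iff_apply_X, mul_apply_X_of_apply_X hg hβ, mul_apply_X_of_apply_X hα hg,
    mul_comm u v, add_right_inj, C_inj]

theorem exists_mem_Bx_conj_eq_iff {α β : R[X] ≃ₐ[R] R[X]} {u a b : R}
    (hα : α X = C u * X + C a) (hβ : β X = C u * X + C b) :
    (∃ g ∈ Bx R, β = g⁻¹ * α * g) ↔ ∃ (v : Rˣ) (c : R), v * a + c * (u - 1) = b := by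
  simp only [mul_assoc, eq_inv_mul_iff_mul_eq]
  constructor
  · rintro ⟨g, ⟨v, c, hg⟩, hconj⟩
    exact ⟨v, -c, by linear_combination -(mul_eq_mul_iff_of_apply_X hg hα hβ).mp hconj⟩
  · rintro ⟨v, c, hvc⟩
    let _ : Invertible (v : R) := v.invertible
    have hg : algEquivCMulXAddC (v : R) (-c) X = C (v : R) * X + C (-c) := by simp
    exact ⟨_, ⟨v, -c, hg⟩,
      (mul_eq_mul_iff_of_apply_X hg hα hβ).mpr (by linear_combination -hvc)⟩

end AffineAutomorphisms

namespace ZMod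

theorem exists_units_eq_intCast_add_mul {n k : ℕ} [NeZero n] (hk : k ∣ n) {x : ℤ}
    (hx : IsCoprime x k) : ∃ (v : (ZMod n)ˣ) (j : ℤ), (v : ZMod n) = x + j * k := by
  obtain ⟨v, hv⟩ := unitsMap_surjective hk (unitOfIsCoprime x hx)
  have hvk : ((cast (v : ZMod n) : ℤ) : ZMod k) = x := by
    rw [intCast_cast, ← unitsMap_val hk, hv, coe_unitOfIsCoprime]
  obtain ⟨j, hj⟩ := (intCast_eq_intCast_iff_dvd_sub _ _ _).mp hvk.symm
  refine ⟨v, j, ?_⟩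
  rw [← intCast_zmod_cast (v : ZMod n)]
  push_cast [show (cast (v : ZMod n) : ℤ) = x + j * k by linear_combination hj]
  ring

theorem intCast_gcd_dvd_of_mul_add_mul_eq {n : ℕ} {a e b : ℤ} (ha : a ∣ n) {v c : ZMod n}
    (h : v * a + c * e = b) : (Int.gcd e a : ℤ) ∣ b := by
  have hd : Int.gcd e a ∣ n := Int.natCast_dvd_natCast.mp ((Int.gcd_dvd_right e a).trans ha)
  have h' := congrArg (castHom hd (ZMod (Int.gcd e a))) h
  simp only [map_add, map_mul, map_intCast,
    (intCast_zmod_eq_zero_iff_dvd _ _).mpr (Int.gcd_dvd_left e a),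
    (intCast_zmod_eq_zero_iff_dvd _ _).mpr (Int.gcd_dvd_right e a), mul_zero, add_zero] at h'
  exact (intCast_zmod_eq_zero_iff_dvd _ _).mp h'.symm

theorem exists_units_mul_add_mul_eq_gcd {n : ℕ} [NeZero n] {a : ℤ} (ha : a ∣ n) (e : ℤ) :
    ∃ (v : (ZMod n)ˣ) (c : ZMod n), (v : ZMod n) * a + c * e = (Int.gcd e a : ℤ) := by
  obtain ⟨N, hN⟩ := ha
  have ha0 : a ≠ 0 := by rintro rfl; simp [NeZero.ne n] at hN
  obtain ⟨e', a', hcop, he, ha'⟩ := Int.exists_gcd_one (Int.gcd_pos_of_ne_zero_right e ha0)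
  obtain ⟨y, x, hxy⟩ := Int.isCoprime_iff_gcd_eq_one.mpr hcop
  set k := Int.gcd e' N
  have hk : k ∣ n :=
    Int.natCast_dvd_natCast.mp ((Int.gcd_dvd_right e' N).trans ⟨a, by rw [hN, mul_comm]⟩)
  have hxe : IsCoprime x e' := ⟨a', y, by linear_combination hxy⟩
  have hx : IsCoprime x k := hxe.of_isCoprime_of_dvd_right (Int.gcd_dvd_left e' N)
  obtain ⟨v, j, hv⟩ := exists_units_eq_intCast_add_mul hk hx
  have key : (x + j * k) * a + (y - j * Int.gcdA e' N * a') * e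
      = Int.gcd e a + n * (j * Int.gcdB e' N) := by
    linear_combination (j * a) * Int.gcd_eq_gcd_ab e' N - (j * Int.gcdB e' N) * hN
      + (x + j * Int.gcdA e' N * e') * ha' + (y - j * Int.gcdA e' N * a') * he
      + (Int.gcd e a : ℤ) * hxy
  refine ⟨v, ((y - j * Int.gcdA e' N * a' : ℤ) : ZMod n), ?_⟩
  rw [hv]
  exact_mod_cast (congrArg (Int.cast : ℤ → ZMod n) key).trans (by simp)

theorem exists_units_mul_add_mul_eq_iff {n : ℕ} [NeZero n] {a b : ℤ} (ha : a ∣ n)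
    (hb : b ∣ n) (e : ℤ) :
    (∃ (v : (ZMod n)ˣ) (c : ZMod n), (v : ZMod n) * a + c * e = b) ↔
      Int.gcd e a = Int.gcd e b := by
  constructor
  · rintro ⟨v, c, h⟩
    have hab := intCast_gcd_dvd_of_mul_add_mul_eq ha h
    have h' : ↑v⁻¹ * b + -(↑v⁻¹ * c) * e = (a : ZMod n) := by
      linear_combination (-↑v⁻¹) * h + a * v.inv_mul
    have hba := intCast_gcd_dvd_of_mul_add_mul_eq hb h'
    exact Nat.dvd_antisymm
      (Int.natCast_dvd_natCast.mp (Int.dvd_coe_gcd (Int.gcd_dvd_left e a) hab))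
      (Int.natCast_dvd_natCast.mp (Int.dvd_coe_gcd (Int.gcd_dvd_left e b) hba))
  · intro hgcd
    obtain ⟨v, c, hv⟩ := exists_units_mul_add_mul_eq_gcd ha e
    obtain ⟨w, d, hw⟩ := exists_units_mul_add_mul_eq_gcd hb e
    refine ⟨w⁻¹ * v, ↑w⁻¹ * (c - d), ?_⟩
    rw [hgcd, ← hw] at hv
    push_cast
    linear_combination ↑w⁻¹ * hv + b * w.inv_mul

end ZMod

theorem zmodn_conjugate_iff_gcd_sub_one_eq_general (n : ℕ) (hn : 1 < n) (u : ℤ)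
    (a b : ℕ) (han : a ∣ n) (hbn : b ∣ n)
    (α β : (ZMod n)[X] ≃ₐ[ZMod n] (ZMod n)[X])
    (hα : α X = C ((u : ZMod n)) * X + C ((a : ZMod n)))
    (hβ : β X = C ((u : ZMod n)) * X + C ((b : ZMod n))) :
    (∃ g ∈ Bx (ZMod n), β = g⁻¹ * α * g) ↔
      Int.gcd (u - 1) a = Int.gcd (u - 1) b := by
  have : NeZero n := ⟨by omega⟩
  rw [exists_mem_Bx_conj_eq_iff hα hβ, ← ZMod.exists_units_mul_add_mul_eq_iff
    (Int.natCast_dvd_natCast.mpr han) (Int.natCast_dvd_natCast.mpr hbn)]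
  push_cast
  rfl

/-- Theorem: for `a, b` positive divisors of `n`, the elements `α(x) = u·x + a` and
`β(x) = u·x + b` of `B(ℤ_n)` are conjugate iff `gcd(u-1, a) = gcd(u-1, b)`. -/
theorem zmodn_conjugate_iff_gcd_sub_one_eq (n : ℕ) (hn : 1 < n) (u : ℤ)
    (hu : Int.gcd u n = 1) (a b : ℕ) (ha : 0 < a) (hb : 0 < b)
    (han : a ∣ n) (hbn : b ∣ n)
    (α β : (ZMod n)[X] ≃ₐ[ZMod n] (ZMod n)[X])
    (hα : α X = C ((u : ZMod n)) * X + C ((a : ZMod n)))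
    (hβ : β X = C ((u : ZMod n)) * X + C ((b : ZMod n))) :
    (∃ g ∈ Bx (ZMod n), β = g⁻¹ * α * g) ↔
      Int.gcd (u - 1) a = Int.gcd (u - 1) b :=
  zmodn_conjugate_iff_gcd_sub_one_eq_general n hn u a b han hbn α β hα hβ
end
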